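/- arXiv:2203.14796 — 9 statements merged into one kernel-verified Lean document; each statement's English description precedes it below -/
import Mathlib

section
/- For every k ∈ ℕ and every m ∈ ℚ, q_k(m) = p_k(m) + p_{k-1}(m). Moreover, for every k ∈ ℕ and every positive integer m, the string-type recursions hold: (k+1)·p_{k+1}(m) = (m−k−1)·p_k(m) + Σ_{j=1}^{m−1} 2j·p_k(j), and (k+1)·q_{k+1}(m) = (m−k)·q_k(m) + Σ_{j=1}^{m−1} 2j·q_k(j). -/
/-!
Both `p_k` and `q_k` are products of two binomial coefficients, and each factor changes by a
rational factor when `k` or `m` is shifted by one. In particular `p_{k+1}` and `q_{k+1}` are the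
multiples `(m² - (k+1)²)/(k+1)²` and `m²/(k+1)²` of `p_k`, which gives the first identity. For the recursions, taking the difference of the two sides between
`m + 1` and `m` reduces each to a two-term identity between `p_k(m + 1)` and `p_k(m)` (resp.
`q_k`), which follows from the shift rule `(x + 1 - k) binom(x + 1, k) = (x + 1) binom(x, k)`;
the recursions then follow by telescoping from `m = 1`.
-/

/-- Generalized binomial coefficient `binom(x,k) = x(x-1)⋯(x-k+1)/k!`. -/
def qbinom (x : ℚ) (k : ℕ) : ℚ := (∏ i ∈ Finset.range k, (x - i)) / (Nat.factorial k)

/-- `p_k(m) = binom(m-1,k)·binom(m+k,k)`. -/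
def pPoly (k : ℕ) (m : ℚ) : ℚ := qbinom (m - 1) k * qbinom (m + k) k

/-- `q_k(m) = binom(m,k)·binom(m+k-1,k)`. -/
def qPoly (k : ℕ) (m : ℚ) : ℚ := qbinom m k * qbinom (m + k - 1) k

theorem Nat.eq_add_sum_Ico_of_sub_eq {M : Type*} [AddCommGroup M] {L R f : ℕ → M}
    (h₁ : L 1 = R 1) (hstep : ∀ n, L (n + 1) - L n = R (n + 1) - R n + f n) :
    ∀ m, 1 ≤ m → L m = R m + ∑ j ∈ Finset.Ico 1 m, f j := by
  intro m hm
  induction m, hm using Nat.le_induction with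
  | base => simpa using h₁
  | succ n hn ih =>
    have h := hstep n
    rw [ih, sub_eq_iff_eq_add] at h
    rw [h, Finset.sum_Ico_succ_top hn]
    abel

section qbinom

variable (x : ℚ) (k : ℕ)

theorem qbinom_zero : qbinom x 0 = 1 := by
  simp [qbinom]

theorem qbinom_succ : qbinom x (k + 1) = qbinom x k * (x - k) / (k + 1) := by
  simp only [qbinom, Finset.prod_range_succ, Nat.factorial_succ]
  push_cast
  field_simp

theorem qbinom_add_one_succ : qbinom (x + 1) (k + 1) = (x + 1) * qbinom x k / (k + 1) := by
  simp only [qbinom, Finset.prod_range_succ', Nat.factorial_succ]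
  push_cast
  simp only [add_sub_add_right_eq_sub, sub_zero]
  field_simp

theorem sub_mul_qbinom_add_one : (x + 1 - k) * qbinom (x + 1) k = (x + 1) * qbinom x k := by
  have h := qbinom_succ (x + 1) k
  rw [qbinom_add_one_succ] at h
  field_simp at h
  linear_combination -h

theorem qbinom_zero_succ : qbinom 0 (k + 1) = 0 := by
  simpa using qbinom_add_one_succ (-1) k

end qbinom

section pq

variable (k : ℕ) (m : ℚ)

theorem pPoly_zero : pPoly 0 m = 1 := by
  simp [pPoly, qbinom_zero]

theorem qPoly_zero : qPoly 0 m = 1 := by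
  simp [qPoly, qbinom_zero]

theorem pPoly_succ : pPoly (k + 1) m = (m - 1 - k) * (m + k + 1) / (k + 1) ^ 2 * pPoly k m := by
  have h : m + ((k + 1 : ℕ) : ℚ) = (m + k) + 1 := by push_cast; ring
  rw [pPoly, h, qbinom_succ, qbinom_add_one_succ, pPoly]
  field_simp

theorem qPoly_succ : qPoly (k + 1) m = (m - k) * (m + k) / (k + 1) ^ 2 * qPoly k m := by
  have h : m + ((k + 1 : ℕ) : ℚ) - 1 = (m + k - 1) + 1 := by push_cast; ring
  rw [qPoly, h, qbinom_succ, qbinom_add_one_succ, qPoly, sub_add_cancel]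
  field_simp

theorem qPoly_succ_eq_sq_mul_pPoly : qPoly (k + 1) m = m ^ 2 / (k + 1) ^ 2 * pPoly k m := by
  have h : m + ((k + 1 : ℕ) : ℚ) - 1 = m + k := by push_cast; ring
  have hm : qbinom m (k + 1) = m * qbinom (m - 1) k / (k + 1) := by
    simpa using qbinom_add_one_succ (m - 1) k
  rw [qPoly, h, hm, qbinom_succ, pPoly]
  field_simp
  ring

theorem qPoly_succ_eq_pPoly_succ_add_pPoly : qPoly (k + 1) m = pPoly (k + 1) m + pPoly k m := by
  rw [qPoly_succ_eq_sq_mul_pPoly, pPoly_succ]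
  field_simp
  ring

theorem pPoly_add_one_mul : (m - k) * (m + 1) * pPoly k (m + 1) = m * (m + k + 1) * pPoly k m := by
  have h₁ := sub_mul_qbinom_add_one (m - 1) k
  have h₂ := sub_mul_qbinom_add_one (m + k) k
  simp only [sub_add_cancel] at h₁
  rw [pPoly, pPoly, add_sub_cancel_right, add_right_comm]
  linear_combination (m + 1) * qbinom (m + k + 1) k * h₁ + m * qbinom (m - 1) k * h₂

theorem qPoly_add_one_mul :
    m * (m + 1 - k) * qPoly k (m + 1) = (m + 1) * (m + k) * qPoly k m := by
  have h₁ := sub_mul_qbinom_add_one m k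
  have h₂ := sub_mul_qbinom_add_one (m + k - 1) k
  simp only [sub_add_cancel] at h₂
  rw [qPoly, qPoly, add_right_comm, add_sub_cancel_right]
  linear_combination m * qbinom (m + k) k * h₁ + (m + 1) * qbinom m k * h₂

theorem pPoly_succ_add_one_sub :
    (k + 1) * (pPoly (k + 1) (m + 1) - pPoly (k + 1) m) =
      (m - k) * pPoly k (m + 1) + (m + k + 1) * pPoly k m := by
  rw [pPoly_succ, pPoly_succ]
  field_simp
  linear_combination pPoly_add_one_mul k m

theorem qPoly_succ_add_one_sub :
    (k + 1) * (qPoly (k + 1) (m + 1) - qPoly (k + 1) m) =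
      (m + 1 - k) * qPoly k (m + 1) + (m + k) * qPoly k m := by
  rw [qPoly_succ, qPoly_succ]
  field_simp
  linear_combination qPoly_add_one_mul k m

theorem pPoly_succ_one : pPoly (k + 1) 1 = 0 := by
  simp [pPoly, qbinom_zero_succ]

end pq

/-- `q_k = p_k + p_{k-1}` (with `p_{-1} := 0`), together with the string-type
recursions for `p_k` and `q_k` at positive integer values. -/
theorem stmt0 :
    (∀ (k : ℕ) (m : ℚ),
      qPoly k m = pPoly k m + (if k = 0 then 0 else pPoly (k - 1) m)) ∧
    (∀ (k m : ℕ), 1 ≤ m →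
      (k + 1 : ℚ) * pPoly (k + 1) (m : ℚ) =
        ((m : ℚ) - k - 1) * pPoly k (m : ℚ) +
          ∑ j ∈ Finset.Ico 1 m, (2 * j : ℚ) * pPoly k (j : ℚ)) ∧
    (∀ (k m : ℕ), 1 ≤ m →
      (k + 1 : ℚ) * qPoly (k + 1) (m : ℚ) =
        ((m : ℚ) - k) * qPoly k (m : ℚ) +
          ∑ j ∈ Finset.Ico 1 m, (2 * j : ℚ) * qPoly k (j : ℚ)) := by
  refine ⟨?_, fun k => ?_, fun k => ?_⟩
  · rintro (_ | k) m
    · simp [pPoly_zero, qPoly_zero]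
    · simpa using qPoly_succ_eq_pPoly_succ_add_pPoly k m
  · refine Nat.eq_add_sum_Ico_of_sub_eq ?_ fun n => ?_
    · rcases k with _ | k <;> simp [pPoly_succ_one]
    · push_cast
      linear_combination pPoly_succ_add_one_sub k n
  · refine Nat.eq_add_sum_Ico_of_sub_eq ?_ fun n => ?_
    · rw [qPoly_succ]
      push_cast
      field_simp
      ring
    · push_cast
      linear_combination qPoly_succ_add_one_sub k n
end

section
/- For every k ∈ ℕ and every positive half-integer m (i.e. m = M + 1/2 with M ∈ ℕ): (k+1)·p̃_{k+1}(m) = (m−k−1/2)·p̃_k(m) + Σ_{j} 2j·p̃_k(j), where the sum runs over all half-integers j with 0 < j < m; equivalently, (k+1)·p̃_{k+1}(M+1/2) = (M−k)·p̃_k(M+1/2) + Σ_{J=0}^{M−1} (2J+1)·p̃_k(J+1/2). -/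
/-- `p̃_k(m) = binom(m-1/2,k)·binom(m+k-1/2,k)`. -/
def ptilde (k : ℕ) (m : ℚ) : ℚ := qbinom (m - 1/2) k * qbinom (m + k - 1/2) k

/-!
Up to the factor `(k!)²`, `p̃_k(x)` is the rising factorial of length `2k` starting at
`x - k + 1/2`, i.e. the product of the consecutive factors `x - k + 1/2, …, x + k - 1/2`.
Shifting `x` or `k` by one therefore only changes it by linear factors, and these relations
give `F(x + 1) - F(x) = 2x·p̃_k(x)` for `F(x) = (k+1)·p̃_{k+1}(x) - (x - k - 1/2)·p̃_k(x)`.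
Since `F(1/2) = 0`, the identity follows by telescoping over `x = 1/2, 3/2, …, M - 1/2`.
-/

open Polynomial Nat

theorem ascPochhammer_succ_eval_left {S : Type*} [CommSemiring S] (n : ℕ) (y : S) :
    (ascPochhammer S (n + 1)).eval y = y * (ascPochhammer S n).eval (y + 1) := by
  rw [ascPochhammer_succ_left, eval_mul, eval_X, eval_comp, eval_add, eval_X, eval_one]

theorem qbinom_eq_ascPochhammer (x : ℚ) (k : ℕ) :
    qbinom x k = (ascPochhammer ℚ k).eval (x - k + 1) / k ! := by
  rw [qbinom, ← descPochhammer_eval_eq_prod_range, descPochhammer_eval_eq_ascPochhammer]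

theorem ptilde_eq_ascPochhammer (k : ℕ) (x : ℚ) :
    ptilde k x = (ascPochhammer ℚ (2 * k)).eval (x - k + 1/2) / (k ! : ℚ) ^ 2 := by
  have h := congrArg (eval (x - k + 1/2)) (ascPochhammer_mul ℚ k k)
  rw [eval_mul, eval_comp, eval_add, eval_X, eval_natCast] at h
  rw [ptilde, qbinom_eq_ascPochhammer, qbinom_eq_ascPochhammer, two_mul, ← h]
  ring_nf

theorem ptilde_add_one (k : ℕ) (x : ℚ) :
    (x + 1/2 - k) * ptilde k (x + 1) = (x + 1/2 + k) * ptilde k x := by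
  have h := ascPochhammer_succ_eval_left (2 * k) (x - k + 1/2)
  rw [ascPochhammer_succ_eval] at h
  rw [ptilde_eq_ascPochhammer, ptilde_eq_ascPochhammer,
    show x + 1 - k + 1/2 = x - k + 1/2 + 1 by ring, ← mul_div_assoc, ← mul_div_assoc]
  congr 1
  push_cast at h
  linear_combination -h

theorem ptilde_succ (k : ℕ) (x : ℚ) :
    ((k : ℚ) + 1) ^ 2 * ptilde (k + 1) x = (x - 1/2 - k) * (x + 1/2 + k) * ptilde k x := by
  rw [ptilde_eq_ascPochhammer, ptilde_eq_ascPochhammer,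
    show x - ((k + 1 : ℕ) : ℚ) + 1/2 = x - k + 1/2 - 1 by push_cast; ring,
    show 2 * (k + 1) = 2 * k + 1 + 1 by ring, ascPochhammer_succ_eval_left, sub_add_cancel,
    ascPochhammer_succ_eval, factorial_succ]
  push_cast
  field_simp
  ring

theorem ptilde_telescope_step (k : ℕ) (x : ℚ) :
    (k + 1) * ptilde (k + 1) (x + 1) - (x + 1/2 - k) * ptilde k (x + 1) =
      (k + 1) * ptilde (k + 1) x - (x - 1/2 - k) * ptilde k x + 2 * x * ptilde k x := by
  apply mul_left_cancel₀ (show (k : ℚ) + 1 ≠ 0 by positivity)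
  linear_combination ptilde_succ k (x + 1) - ptilde_succ k x + (x + 1/2) * ptilde_add_one k x

/-- String-type recursion for `p̃_k` at positive half-integer values `m = M + 1/2`:
`(k+1)·p̃_{k+1}(m) = (m-k-1/2)·p̃_k(m) + Σ_{0<j<m, j half-integer} 2j·p̃_k(j)`. -/
theorem stmt4 (k M : ℕ) :
    (k + 1 : ℚ) * ptilde (k + 1) ((M : ℚ) + 1/2) =
      ((M : ℚ) - k) * ptilde k ((M : ℚ) + 1/2) +
        ∑ J ∈ Finset.range M, (2 * (J : ℚ) + 1) * ptilde k ((J : ℚ) + 1/2) := by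
  induction M with
  | zero =>
    apply mul_left_cancel₀ (show (k : ℚ) + 1 ≠ 0 by positivity)
    simp only [Nat.cast_zero, zero_add, zero_sub, Finset.range_zero, Finset.sum_empty, add_zero]
    linear_combination ptilde_succ k (1/2)
  | succ M ih =>
    have step := ptilde_telescope_step k (M + 1/2)
    rw [show (M : ℚ) + 1/2 + 1 = M + 1 + 1/2 by ring] at step
    rw [Finset.sum_range_succ]
    push_cast
    linear_combination ih + step
end

section
/- For all integers L ≥ 0 and k ≥ 0: Σ_{M=0}^{L} ((2M+1)/(2L+1))·C(2L+1, L−M)·C(M,k)·C(M+k,k) = C(L,k)·C(2L,L), where all C(·,·) are ordinary binomial coefficients. (This is the identity Σ_{m ∈ {1/2, 3/2, …, ℓ}} A_{ℓ,m}·p̃_k(m) = binom(ℓ−1/2, k)·binom(2ℓ−1, ℓ−1/2) for the half-integer ℓ = L+1/2, where A_{ℓ,m} := (2m/2ℓ)·C(2ℓ, ℓ−m) and p̃_k(M+1/2) = C(M,k)·C(M+k,k).) -/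
/-!
Let `T_k = ∑_{M ≤ L} (2M+1) C(2L+1, L-M) C(M,k) C(M+k,k)`, so that the left-hand side is
`T_k / (2L+1)`. The summands of `(k+1) T_{k+1} - (L-k) T_k` telescope (a Zeilberger-type
certificate), giving the recurrence `(k+1) T_{k+1} = (L-k) T_k`, which is also satisfied by
`(2L+1) C(L,k) C(2L,L)`. The initial value `T_0 = (2L+1) C(2L,L)` telescopes in the same way.
-/

open Finset

section CastChoose

variable {K : Type*} [Field K] [CharZero K]

theorem Nat.cast_choose_succ_right (n k : ℕ) :
    (n.choose (k + 1) : K) = (n - k) / (k + 1) * n.choose k := by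
  rcases le_or_gt k n with hkn | hnk
  · rw [div_mul_eq_mul_div, eq_div_iff k.cast_add_one_ne_zero]
    have h := congrArg (Nat.cast : ℕ → K) (n.choose_succ_right_eq k)
    push_cast [hkn] at h
    linear_combination h
  · simp [Nat.choose_eq_zero_of_lt hnk, Nat.choose_eq_zero_of_lt (hnk.trans k.lt_succ_self)]

theorem Nat.cast_succ_choose_succ (n k : ℕ) :
    ((n + 1).choose (k + 1) : K) = (n + 1) / (k + 1) * n.choose k := by
  rw [div_mul_eq_mul_div, eq_div_iff k.cast_add_one_ne_zero]
  exact_mod_cast (n.add_one_mul_choose_eq k).symm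

theorem Nat.cast_add_succ_choose (n k : ℕ) :
    ((n + k + 1).choose k : K) = (n + k + 1) / (n + 1) * (n + k).choose k := by
  rw [div_mul_eq_mul_div, eq_div_iff n.cast_add_one_ne_zero]
  have h := congrArg (Nat.cast : ℕ → K) ((n + k).choose_mul_succ_eq k)
  rw [show n + k + 1 - k = n + 1 by omega] at h
  push_cast at h
  linear_combination -h

end CastChoose

namespace BallotSum

def term (L k M : ℕ) : ℚ :=
  (2 * M + 1) * (2 * L + 1).choose (L - M) * M.choose k * (M + k).choose k

-- The factor `L + 1 - M` is rational, so the certificate vanishes at `M = L + 1`.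
def certificate (L k M : ℕ) : ℚ :=
  M * (L + 1 - M) * (2 * L + 1).choose (L + 1 - M) * M.choose (k + 1) * (M + k).choose k

variable {L M : ℕ}

theorem cast_succ_sub_ne_zero (hM : M ≤ L) : (L + 1 - M : ℚ) ≠ 0 := by
  have : (M : ℚ) ≤ L := by exact_mod_cast hM
  linarith

theorem cast_choose_succ_sub (hM : M ≤ L) :
    ((2 * L + 1).choose (L + 1 - M) : ℚ) =
      (L + M + 1) / (L + 1 - M) * (2 * L + 1).choose (L - M) := by
  rw [show L + 1 - M = L - M + 1 by omega, Nat.cast_choose_succ_right]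
  push_cast [hM]
  ring

theorem term_step (k : ℕ) (hM : M ≤ L) :
    (k + 1) * term L (k + 1) M - (L - k) * term L k M =
      certificate L k M - certificate L k (M + 1) := by
  have := cast_succ_sub_ne_zero hM
  -- Once every binomial is a rational multiple of `C(2L+1, L-M)`, `C(M,k)` or `C(M+k,k)`,
  -- this is an identity of rational functions.
  simp only [term, certificate]
  rw [show L + 1 - (M + 1) = L - M by omega, show M + (k + 1) = M + k + 1 by ring,
    show M + 1 + k = M + k + 1 by ring, cast_choose_succ_sub hM, Nat.cast_choose_succ_right M k,
    Nat.cast_succ_choose_succ (M + k), Nat.cast_succ_choose_succ M, Nat.cast_add_succ_choose]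
  field_simp
  push_cast
  ring

theorem sum_term_succ (L k : ℕ) :
    (k + 1) * ∑ M ∈ range (L + 1), term L (k + 1) M =
      (L - k) * ∑ M ∈ range (L + 1), term L k M := by
  rw [← sub_eq_zero, mul_sum, mul_sum, ← sum_sub_distrib,
    sum_congr rfl fun M hM => term_step k (Nat.lt_succ_iff.mp (mem_range.mp hM)),
    sum_range_sub']
  simp [certificate]

theorem sum_term_zero (L : ℕ) :
    ∑ M ∈ range (L + 1), term L 0 M = (2 * L + 1) * (2 * L).choose L := by
  let H : ℕ → ℚ := fun M => (L + 1 - M) * (2 * L + 1).choose (L + 1 - M)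
  have hH : ∀ M ∈ range (L + 1), term L 0 M = H M - H (M + 1) := by
    intro M hM
    have hM := Nat.lt_succ_iff.mp (mem_range.mp hM)
    have := cast_succ_sub_ne_zero hM
    simp only [term, H, Nat.choose_zero_right, add_zero, cast_choose_succ_sub hM,
      show L + 1 - (M + 1) = L - M by omega]
    field_simp
    push_cast
    ring
  rw [sum_congr rfl hH, sum_range_sub']
  simp only [H, Nat.cast_zero, sub_zero, Nat.sub_zero, Nat.cast_succ_choose_succ (2 * L) L,
    Nat.cast_mul, Nat.cast_ofNat, Nat.cast_add, Nat.cast_one, sub_self, zero_mul]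
  field_simp

theorem sum_term (L k : ℕ) :
    ∑ M ∈ range (L + 1), term L k M = (2 * L + 1) * L.choose k * (2 * L).choose L := by
  induction k with
  | zero => simp [sum_term_zero]
  | succ k ih =>
    have hk : (k + 1 : ℚ) ≠ 0 := k.cast_add_one_ne_zero
    rw [← mul_right_inj' hk, sum_term_succ, ih, Nat.cast_choose_succ_right]
    field_simp

end BallotSum

/-- The hypergeometric identity
`Σ_{M=0}^{L} ((2M+1)/(2L+1))·C(2L+1,L-M)·C(M,k)·C(M+k,k) = C(L,k)·C(2L,L)`,
i.e. `Σ_{half-integers m ≤ ℓ} A_{ℓ,m}·p̃_k(m) = binom(ℓ-1/2,k)·binom(2ℓ-1,ℓ-1/2)`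
for the half-integer `ℓ = L + 1/2`. -/
theorem stmt7 (L k : ℕ) :
    ∑ M ∈ Finset.range (L + 1),
        ((2 * (M : ℚ) + 1) / (2 * (L : ℚ) + 1)) * (Nat.choose (2 * L + 1) (L - M) : ℚ) *
          (Nat.choose M k : ℚ) * (Nat.choose (M + k) k : ℚ) =
      (Nat.choose L k : ℚ) * (Nat.choose (2 * L) L : ℚ) := by
  have hL : (2 * L + 1 : ℚ) ≠ 0 := by positivity
  calc _ = (∑ M ∈ range (L + 1), BallotSum.term L k M) / (2 * L + 1) := by
        rw [sum_div]
        refine sum_congr rfl fun M _ => ?_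
        simp only [BallotSum.term]
        ring
    _ = _ := by
        rw [BallotSum.sum_term]
        field_simp
end

section
/- Fix ε ∈ {0,1} and nonnegative integers r, s, T, and set 2ℓ := 2T+s+1+ε (so that ℓ−(s+1+ε)/2 = T). Then Σ_{j=0}^{T} ((s+1+ε+2j)/(2ℓ))·C(2ℓ, T−j)·C(r+s, s)·C(s+ε+j, r+s)·C(j+r+s, r+s) = (2ℓ−1)!/(T!·(T+ε−r)!·r!·s!) if T+ε ≥ r, and the left-hand side equals 0 if T+ε < r. Equivalently, Σ_{m ∈ ℤ_{≥0}/2} A_{ℓ,m}·π^{(ε)}_{r,s}(m) equals the multinomial coefficient C(2ℓ−1; ℓ−(s+1+ε)/2, ℓ−r−(s+1−ε)/2, r, s), where A_{ℓ,m} := (2m/2ℓ)·C(2ℓ, ℓ−m) and the multinomial coefficient is understood to vanish unless all its lower entries are nonnegative integers. -/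
lemma lemC (n m : ℕ) : ((n:ℚ) - m) * (n.choose m) = ((m:ℚ) + 1) * (n.choose (m+1)) := by
  rcases le_or_gt m n with h | h
  · have h2 : ((n.choose (m+1) * (m+1) : ℕ) : ℚ) = ((n.choose m * (n - m) : ℕ) : ℚ) := by
      exact_mod_cast congrArg (Nat.cast (R := ℚ)) (Nat.choose_succ_right_eq n m)
    push_cast [Nat.cast_sub h] at h2
    linarith
  · simp [Nat.choose_eq_zero_of_lt h, Nat.choose_eq_zero_of_lt (h.trans (Nat.lt_succ_self m))]

lemma lemA (n k : ℕ) : ((n:ℚ) + 1 - k) * ((n+1).choose k) = ((n:ℚ) + 1) * (n.choose k) := by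
  rcases le_or_gt k (n+1) with h | h
  · match k, h with
    | 0, _ => simp
    | (m+1), h =>
      have hm : m ≤ n := by omega
      have h1 : ((n:ℚ) + 1) * (n.choose m) = (((n+1).choose (m+1)) : ℚ) * (m+1) := by
        exact_mod_cast congrArg (Nat.cast (R := ℚ)) (Nat.add_one_mul_choose_eq n m)
      have h2 := lemC n m
      have hm1 : ((m:ℚ) + 1) ≠ 0 := by positivity
      apply mul_left_cancel₀ hm1
      push_cast
      linear_combination (-((n:ℚ) - m)) * h1 + ((n:ℚ)+1) * h2
  · have h1 : n < k := by omega
    simp [Nat.choose_eq_zero_of_lt h, Nat.choose_eq_zero_of_lt h1]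

lemma certP (a k j d : ℕ) :
    ((d:ℚ)+1) * ((d:ℚ)+2) *
      ( (2*(j:ℚ)+2*(d:ℚ)+(a:ℚ)+4) * (2*(j:ℚ)+2*(d:ℚ)+(a:ℚ)+5) * ((a:ℚ)+1+2*(j:ℚ)) *
          (((2*j+2*d+a+3).choose (d+1) : ℚ) * ((a+j).choose k : ℚ) * ((j+k).choose k : ℚ))
        - ((j:ℚ)+(d:ℚ)+2) * ((j:ℚ)+(d:ℚ)+(a:ℚ)+2-(k:ℚ)) * ((a:ℚ)+1+2*(j:ℚ)) *
          (((2*j+2*d+a+5).choose (d+2) : ℚ) * ((a+j).choose k : ℚ) * ((j+k).choose k : ℚ)) )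
  = (2*(j:ℚ)+2*(d:ℚ)+(a:ℚ)+4) * (2*(j:ℚ)+2*(d:ℚ)+(a:ℚ)+5) *
      ( ((d:ℚ)+2) * ((j:ℚ)+1) * ((a:ℚ)+(j:ℚ)+1-(k:ℚ)) *
          (((2*j+2*d+a+3).choose d : ℚ) * ((a+j+1).choose k : ℚ) * ((j+k+1).choose k : ℚ))
        - ((d:ℚ)+1) * (j:ℚ) * ((a:ℚ)+(j:ℚ)-(k:ℚ)) *
          (((2*j+2*d+a+3).choose (d+1) : ℚ) * ((a+j).choose k : ℚ) * ((j+k).choose k : ℚ)) ) := by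
  have h1 := lemC (2*j+2*d+a+3) d
  have h2 := lemC (2*j+2*d+a+3) (d+1)
  have h3 : ((2*j+2*d+a+5).choose (d+2) : ℚ)
      = ((2*j+2*d+a+3).choose d : ℚ) + 2*((2*j+2*d+a+3).choose (d+1) : ℚ)
        + ((2*j+2*d+a+3).choose (d+2) : ℚ) := by
    have e : (2*j+2*d+a+5).choose (d+2)
        = (2*j+2*d+a+3).choose d + 2*((2*j+2*d+a+3).choose (d+1)) + (2*j+2*d+a+3).choose (d+2) := by
      have p1 : (2*j+2*d+a+5).choose (d+2)
          = (2*j+2*d+a+4).choose (d+1) + (2*j+2*d+a+4).choose (d+2) :=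
        Nat.choose_succ_succ (2*j+2*d+a+4) (d+1)
      have p2 : (2*j+2*d+a+4).choose (d+1)
          = (2*j+2*d+a+3).choose d + (2*j+2*d+a+3).choose (d+1) :=
        Nat.choose_succ_succ (2*j+2*d+a+3) d
      have p3 : (2*j+2*d+a+4).choose (d+2)
          = (2*j+2*d+a+3).choose (d+1) + (2*j+2*d+a+3).choose (d+2) :=
        Nat.choose_succ_succ (2*j+2*d+a+3) (d+1)
      omega
    exact_mod_cast congrArg (Nat.cast (R := ℚ)) e
  have h4 := lemA (a+j) k
  have h5 := lemA (j+k) k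
  set X0 := ((2*j+2*d+a+3).choose d : ℚ)
  set X1 := ((2*j+2*d+a+3).choose (d+1) : ℚ)
  set X2 := ((2*j+2*d+a+3).choose (d+2) : ℚ)
  set X3 := ((2*j+2*d+a+5).choose (d+2) : ℚ)
  set Y0 := ((a+j).choose k : ℚ)
  set Y1 := ((a+j+1).choose k : ℚ)
  set Z0 := ((j+k).choose k : ℚ)
  set Z1 := ((j+k+1).choose k : ℚ)
  push_cast at h1 h2 h4 h5
  linear_combination (-((16:ℚ)*Y0*Z0 + (12:ℚ)*(k:ℚ)*Y0*Z0 + (18:ℚ)*(a:ℚ)*Y0*Z0 + (14:ℚ)*(a:ℚ)*(k:ℚ)*Y0*Z0 + (2:ℚ)*(a:ℚ)*(a:ℚ)*Y0*Z0 + (2:ℚ)*(a:ℚ)*(a:ℚ)*(k:ℚ)*Y0*Z0 + (20:ℚ)*(d:ℚ)*Y0*Z0 + (12:ℚ)*(d:ℚ)*(k:ℚ)*Y0*Z0 + (21:ℚ)*(d:ℚ)*(a:ℚ)*Y0*Z0 + (13:ℚ)*(d:ℚ)*(a:ℚ)*(k:ℚ)*Y0*Z0 + (1:ℚ)*(d:ℚ)*(a:ℚ)*(a:ℚ)*Y0*Z0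 + (1:ℚ)*(d:ℚ)*(a:ℚ)*(a:ℚ)*(k:ℚ)*Y0*Z0 + (8:ℚ)*(d:ℚ)*(d:ℚ)*Y0*Z0 + (3:ℚ)*(d:ℚ)*(d:ℚ)*(k:ℚ)*Y0*Z0 + (8:ℚ)*(d:ℚ)*(d:ℚ)*(a:ℚ)*Y0*Z0 + (3:ℚ)*(d:ℚ)*(d:ℚ)*(a:ℚ)*(k:ℚ)*Y0*Z0 + (1:ℚ)*(d:ℚ)*(d:ℚ)*(d:ℚ)*Y0*Z0 + (1:ℚ)*(d:ℚ)*(d:ℚ)*(d:ℚ)*(a:ℚ)*Y0*Z0 + (36:ℚ)*(j:ℚ)*Y0*Z0 + (14:ℚ)*(j:ℚ)*(k:ℚ)*Y0*Z0 + (22:ℚ)*(j:ℚ)*(a:ℚ)*Y0*Z0 + (6:ℚ)*(j:ℚ)*(a:ℚ)*(k:ℚ)*Y0*Z0 + (2:ℚ)*(j:ℚ)*(a:ℚ)*(a:ℚ)*Y0*Z0 + (42:ℚ)*(j:ℚ)*(d:ℚ)*Y0*Z0 + (11:ℚ)*(j:ℚ)*(d:ℚ)*(k:ℚ)*Y0*Z0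 + (19:ℚ)*(j:ℚ)*(d:ℚ)*(a:ℚ)*Y0*Z0 + (3:ℚ)*(j:ℚ)*(d:ℚ)*(a:ℚ)*(k:ℚ)*Y0*Z0 + (1:ℚ)*(j:ℚ)*(d:ℚ)*(a:ℚ)*(a:ℚ)*Y0*Z0 + (16:ℚ)*(j:ℚ)*(d:ℚ)*(d:ℚ)*Y0*Z0 + (2:ℚ)*(j:ℚ)*(d:ℚ)*(d:ℚ)*(k:ℚ)*Y0*Z0 + (4:ℚ)*(j:ℚ)*(d:ℚ)*(d:ℚ)*(a:ℚ)*Y0*Z0 + (2:ℚ)*(j:ℚ)*(d:ℚ)*(d:ℚ)*(d:ℚ)*Y0*Z0 + (22:ℚ)*(j:ℚ)*(j:ℚ)*Y0*Z0 + (4:ℚ)*(j:ℚ)*(j:ℚ)*(k:ℚ)*Y0*Z0 + (6:ℚ)*(j:ℚ)*(j:ℚ)*(a:ℚ)*Y0*Z0 + (19:ℚ)*(j:ℚ)*(j:ℚ)*(d:ℚ)*Y0*Z0 + (2:ℚ)*(j:ℚ)*(j:ℚ)*(d:ℚ)*(k:ℚ)*Y0*Z0 + (3:ℚ)*(j:ℚ)*(j:ℚ)*(d:ℚ)*(a:ℚ)*Y0*Z0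 + (4:ℚ)*(j:ℚ)*(j:ℚ)*(d:ℚ)*(d:ℚ)*Y0*Z0 + (4:ℚ)*(j:ℚ)*(j:ℚ)*(j:ℚ)*Y0*Z0 + (2:ℚ)*(j:ℚ)*(j:ℚ)*(j:ℚ)*(d:ℚ)*Y0*Z0))*h1 + (-((-4:ℚ)*Y0*Z0 + (2:ℚ)*(k:ℚ)*Y0*Z0 + (-6:ℚ)*(a:ℚ)*Y0*Z0 + (2:ℚ)*(a:ℚ)*(k:ℚ)*Y0*Z0 + (-2:ℚ)*(a:ℚ)*(a:ℚ)*Y0*Z0 + (-8:ℚ)*(d:ℚ)*Y0*Z0 + (3:ℚ)*(d:ℚ)*(k:ℚ)*Y0*Z0 + (-11:ℚ)*(d:ℚ)*(a:ℚ)*Y0*Z0 + (3:ℚ)*(d:ℚ)*(a:ℚ)*(k:ℚ)*Y0*Z0 + (-3:ℚ)*(d:ℚ)*(a:ℚ)*(a:ℚ)*Y0*Z0 + (-5:ℚ)*(d:ℚ)*(d:ℚ)*Y0*Z0 + (1:ℚ)*(d:ℚ)*(d:ℚ)*(k:ℚ)*Y0*Z0 + (-6:ℚ)*(d:ℚ)*(d:ℚ)*(a:ℚ)*Y0*Z0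 + (1:ℚ)*(d:ℚ)*(d:ℚ)*(a:ℚ)*(k:ℚ)*Y0*Z0 + (-1:ℚ)*(d:ℚ)*(d:ℚ)*(a:ℚ)*(a:ℚ)*Y0*Z0 + (-1:ℚ)*(d:ℚ)*(d:ℚ)*(d:ℚ)*Y0*Z0 + (-1:ℚ)*(d:ℚ)*(d:ℚ)*(d:ℚ)*(a:ℚ)*Y0*Z0 + (-12:ℚ)*(j:ℚ)*Y0*Z0 + (5:ℚ)*(j:ℚ)*(k:ℚ)*Y0*Z0 + (-9:ℚ)*(j:ℚ)*(a:ℚ)*Y0*Z0 + (1:ℚ)*(j:ℚ)*(a:ℚ)*(k:ℚ)*Y0*Z0 + (-1:ℚ)*(j:ℚ)*(a:ℚ)*(a:ℚ)*Y0*Z0 + (-22:ℚ)*(j:ℚ)*(d:ℚ)*Y0*Z0 + (7:ℚ)*(j:ℚ)*(d:ℚ)*(k:ℚ)*Y0*Z0 + (-13:ℚ)*(j:ℚ)*(d:ℚ)*(a:ℚ)*Y0*Z0 + (1:ℚ)*(j:ℚ)*(d:ℚ)*(a:ℚ)*(k:ℚ)*Y0*Z0 + (-1:ℚ)*(j:ℚ)*(d:ℚ)*(a:ℚ)*(a:ℚ)*Y0*Z0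 + (-12:ℚ)*(j:ℚ)*(d:ℚ)*(d:ℚ)*Y0*Z0 + (2:ℚ)*(j:ℚ)*(d:ℚ)*(d:ℚ)*(k:ℚ)*Y0*Z0 + (-4:ℚ)*(j:ℚ)*(d:ℚ)*(d:ℚ)*(a:ℚ)*Y0*Z0 + (-2:ℚ)*(j:ℚ)*(d:ℚ)*(d:ℚ)*(d:ℚ)*Y0*Z0 + (-9:ℚ)*(j:ℚ)*(j:ℚ)*Y0*Z0 + (2:ℚ)*(j:ℚ)*(j:ℚ)*(k:ℚ)*Y0*Z0 + (-3:ℚ)*(j:ℚ)*(j:ℚ)*(a:ℚ)*Y0*Z0 + (-13:ℚ)*(j:ℚ)*(j:ℚ)*(d:ℚ)*Y0*Z0 + (2:ℚ)*(j:ℚ)*(j:ℚ)*(d:ℚ)*(k:ℚ)*Y0*Z0 + (-3:ℚ)*(j:ℚ)*(j:ℚ)*(d:ℚ)*(a:ℚ)*Y0*Z0 + (-4:ℚ)*(j:ℚ)*(j:ℚ)*(d:ℚ)*(d:ℚ)*Y0*Z0 + (-2:ℚ)*(j:ℚ)*(j:ℚ)*(j:ℚ)*Y0*Z0 + (-2:ℚ)*(j:ℚ)*(j:ℚ)*(j:ℚ)*(d:ℚ)*Y0*Z0))*h2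 + ((-8:ℚ)*Y0*Z0 + (4:ℚ)*(k:ℚ)*Y0*Z0 + (-12:ℚ)*(a:ℚ)*Y0*Z0 + (4:ℚ)*(a:ℚ)*(k:ℚ)*Y0*Z0 + (-4:ℚ)*(a:ℚ)*(a:ℚ)*Y0*Z0 + (-20:ℚ)*(d:ℚ)*Y0*Z0 + (8:ℚ)*(d:ℚ)*(k:ℚ)*Y0*Z0 + (-28:ℚ)*(d:ℚ)*(a:ℚ)*Y0*Z0 + (8:ℚ)*(d:ℚ)*(a:ℚ)*(k:ℚ)*Y0*Z0 + (-8:ℚ)*(d:ℚ)*(a:ℚ)*(a:ℚ)*Y0*Z0 + (-18:ℚ)*(d:ℚ)*(d:ℚ)*Y0*Z0 + (5:ℚ)*(d:ℚ)*(d:ℚ)*(k:ℚ)*Y0*Z0 + (-23:ℚ)*(d:ℚ)*(d:ℚ)*(a:ℚ)*Y0*Z0 + (5:ℚ)*(d:ℚ)*(d:ℚ)*(a:ℚ)*(k:ℚ)*Y0*Z0 + (-5:ℚ)*(d:ℚ)*(d:ℚ)*(a:ℚ)*(a:ℚ)*Y0*Z0 + (-7:ℚ)*(d:ℚ)*(d:ℚ)*(d:ℚ)*Y0*Z0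 + (1:ℚ)*(d:ℚ)*(d:ℚ)*(d:ℚ)*(k:ℚ)*Y0*Z0 + (-8:ℚ)*(d:ℚ)*(d:ℚ)*(d:ℚ)*(a:ℚ)*Y0*Z0 + (1:ℚ)*(d:ℚ)*(d:ℚ)*(d:ℚ)*(a:ℚ)*(k:ℚ)*Y0*Z0 + (-1:ℚ)*(d:ℚ)*(d:ℚ)*(d:ℚ)*(a:ℚ)*(a:ℚ)*Y0*Z0 + (-1:ℚ)*(d:ℚ)*(d:ℚ)*(d:ℚ)*(d:ℚ)*Y0*Z0 + (-1:ℚ)*(d:ℚ)*(d:ℚ)*(d:ℚ)*(d:ℚ)*(a:ℚ)*Y0*Z0 + (-24:ℚ)*(j:ℚ)*Y0*Z0 + (10:ℚ)*(j:ℚ)*(k:ℚ)*Y0*Z0 + (-18:ℚ)*(j:ℚ)*(a:ℚ)*Y0*Z0 + (2:ℚ)*(j:ℚ)*(a:ℚ)*(k:ℚ)*Y0*Z0 + (-2:ℚ)*(j:ℚ)*(a:ℚ)*(a:ℚ)*Y0*Z0 + (-56:ℚ)*(j:ℚ)*(d:ℚ)*Y0*Z0 + (19:ℚ)*(j:ℚ)*(d:ℚ)*(k:ℚ)*Y0*Z0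 + (-35:ℚ)*(j:ℚ)*(d:ℚ)*(a:ℚ)*Y0*Z0 + (3:ℚ)*(j:ℚ)*(d:ℚ)*(a:ℚ)*(k:ℚ)*Y0*Z0 + (-3:ℚ)*(j:ℚ)*(d:ℚ)*(a:ℚ)*(a:ℚ)*Y0*Z0 + (-46:ℚ)*(j:ℚ)*(d:ℚ)*(d:ℚ)*Y0*Z0 + (11:ℚ)*(j:ℚ)*(d:ℚ)*(d:ℚ)*(k:ℚ)*Y0*Z0 + (-21:ℚ)*(j:ℚ)*(d:ℚ)*(d:ℚ)*(a:ℚ)*Y0*Z0 + (1:ℚ)*(j:ℚ)*(d:ℚ)*(d:ℚ)*(a:ℚ)*(k:ℚ)*Y0*Z0 + (-1:ℚ)*(j:ℚ)*(d:ℚ)*(d:ℚ)*(a:ℚ)*(a:ℚ)*Y0*Z0 + (-16:ℚ)*(j:ℚ)*(d:ℚ)*(d:ℚ)*(d:ℚ)*Y0*Z0 + (2:ℚ)*(j:ℚ)*(d:ℚ)*(d:ℚ)*(d:ℚ)*(k:ℚ)*Y0*Z0 + (-4:ℚ)*(j:ℚ)*(d:ℚ)*(d:ℚ)*(d:ℚ)*(a:ℚ)*Y0*Z0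 + (-2:ℚ)*(j:ℚ)*(d:ℚ)*(d:ℚ)*(d:ℚ)*(d:ℚ)*Y0*Z0 + (-18:ℚ)*(j:ℚ)*(j:ℚ)*Y0*Z0 + (4:ℚ)*(j:ℚ)*(j:ℚ)*(k:ℚ)*Y0*Z0 + (-6:ℚ)*(j:ℚ)*(j:ℚ)*(a:ℚ)*Y0*Z0 + (-35:ℚ)*(j:ℚ)*(j:ℚ)*(d:ℚ)*Y0*Z0 + (6:ℚ)*(j:ℚ)*(j:ℚ)*(d:ℚ)*(k:ℚ)*Y0*Z0 + (-9:ℚ)*(j:ℚ)*(j:ℚ)*(d:ℚ)*(a:ℚ)*Y0*Z0 + (-21:ℚ)*(j:ℚ)*(j:ℚ)*(d:ℚ)*(d:ℚ)*Y0*Z0 + (2:ℚ)*(j:ℚ)*(j:ℚ)*(d:ℚ)*(d:ℚ)*(k:ℚ)*Y0*Z0 + (-3:ℚ)*(j:ℚ)*(j:ℚ)*(d:ℚ)*(d:ℚ)*(a:ℚ)*Y0*Z0 + (-4:ℚ)*(j:ℚ)*(j:ℚ)*(d:ℚ)*(d:ℚ)*(d:ℚ)*Y0*Z0 + (-4:ℚ)*(j:ℚ)*(j:ℚ)*(j:ℚ)*Y0*Z0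 + (-6:ℚ)*(j:ℚ)*(j:ℚ)*(j:ℚ)*(d:ℚ)*Y0*Z0 + (-2:ℚ)*(j:ℚ)*(j:ℚ)*(j:ℚ)*(d:ℚ)*(d:ℚ)*Y0*Z0)*h3 + ((-40:ℚ)*X0*Z1 + (-18:ℚ)*(a:ℚ)*X0*Z1 + (-2:ℚ)*(a:ℚ)*(a:ℚ)*X0*Z1 + (-56:ℚ)*(d:ℚ)*X0*Z1 + (-17:ℚ)*(d:ℚ)*(a:ℚ)*X0*Z1 + (-1:ℚ)*(d:ℚ)*(a:ℚ)*(a:ℚ)*X0*Z1 + (-26:ℚ)*(d:ℚ)*(d:ℚ)*X0*Z1 + (-4:ℚ)*(d:ℚ)*(d:ℚ)*(a:ℚ)*X0*Z1 + (-4:ℚ)*(d:ℚ)*(d:ℚ)*(d:ℚ)*X0*Z1 + (-76:ℚ)*(j:ℚ)*X0*Z1 + (-26:ℚ)*(j:ℚ)*(a:ℚ)*X0*Z1 + (-2:ℚ)*(j:ℚ)*(a:ℚ)*(a:ℚ)*X0*Z1 + (-90:ℚ)*(j:ℚ)*(d:ℚ)*X0*Z1 + (-21:ℚ)*(j:ℚ)*(d:ℚ)*(a:ℚ)*X0*Z1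 + (-1:ℚ)*(j:ℚ)*(d:ℚ)*(a:ℚ)*(a:ℚ)*X0*Z1 + (-34:ℚ)*(j:ℚ)*(d:ℚ)*(d:ℚ)*X0*Z1 + (-4:ℚ)*(j:ℚ)*(d:ℚ)*(d:ℚ)*(a:ℚ)*X0*Z1 + (-4:ℚ)*(j:ℚ)*(d:ℚ)*(d:ℚ)*(d:ℚ)*X0*Z1 + (-44:ℚ)*(j:ℚ)*(j:ℚ)*X0*Z1 + (-8:ℚ)*(j:ℚ)*(j:ℚ)*(a:ℚ)*X0*Z1 + (-38:ℚ)*(j:ℚ)*(j:ℚ)*(d:ℚ)*X0*Z1 + (-4:ℚ)*(j:ℚ)*(j:ℚ)*(d:ℚ)*(a:ℚ)*X0*Z1 + (-8:ℚ)*(j:ℚ)*(j:ℚ)*(d:ℚ)*(d:ℚ)*X0*Z1 + (-8:ℚ)*(j:ℚ)*(j:ℚ)*(j:ℚ)*X0*Z1 + (-4:ℚ)*(j:ℚ)*(j:ℚ)*(j:ℚ)*(d:ℚ)*X0*Z1)*h4 + ((-40:ℚ)*X0*Y0 + (-58:ℚ)*(a:ℚ)*X0*Y0 + (-20:ℚ)*(a:ℚ)*(a:ℚ)*X0*Y0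 + (-2:ℚ)*(a:ℚ)*(a:ℚ)*(a:ℚ)*X0*Y0 + (-56:ℚ)*(d:ℚ)*X0*Y0 + (-73:ℚ)*(d:ℚ)*(a:ℚ)*X0*Y0 + (-18:ℚ)*(d:ℚ)*(a:ℚ)*(a:ℚ)*X0*Y0 + (-1:ℚ)*(d:ℚ)*(a:ℚ)*(a:ℚ)*(a:ℚ)*X0*Y0 + (-26:ℚ)*(d:ℚ)*(d:ℚ)*X0*Y0 + (-30:ℚ)*(d:ℚ)*(d:ℚ)*(a:ℚ)*X0*Y0 + (-4:ℚ)*(d:ℚ)*(d:ℚ)*(a:ℚ)*(a:ℚ)*X0*Y0 + (-4:ℚ)*(d:ℚ)*(d:ℚ)*(d:ℚ)*X0*Y0 + (-4:ℚ)*(d:ℚ)*(d:ℚ)*(d:ℚ)*(a:ℚ)*X0*Y0 + (-76:ℚ)*(j:ℚ)*X0*Y0 + (-62:ℚ)*(j:ℚ)*(a:ℚ)*X0*Y0 + (-10:ℚ)*(j:ℚ)*(a:ℚ)*(a:ℚ)*X0*Y0 + (-90:ℚ)*(j:ℚ)*(d:ℚ)*X0*Y0 + (-55:ℚ)*(j:ℚ)*(d:ℚ)*(a:ℚ)*X0*Y0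 + (-5:ℚ)*(j:ℚ)*(d:ℚ)*(a:ℚ)*(a:ℚ)*X0*Y0 + (-34:ℚ)*(j:ℚ)*(d:ℚ)*(d:ℚ)*X0*Y0 + (-12:ℚ)*(j:ℚ)*(d:ℚ)*(d:ℚ)*(a:ℚ)*X0*Y0 + (-4:ℚ)*(j:ℚ)*(d:ℚ)*(d:ℚ)*(d:ℚ)*X0*Y0 + (-44:ℚ)*(j:ℚ)*(j:ℚ)*X0*Y0 + (-16:ℚ)*(j:ℚ)*(j:ℚ)*(a:ℚ)*X0*Y0 + (-38:ℚ)*(j:ℚ)*(j:ℚ)*(d:ℚ)*X0*Y0 + (-8:ℚ)*(j:ℚ)*(j:ℚ)*(d:ℚ)*(a:ℚ)*X0*Y0 + (-8:ℚ)*(j:ℚ)*(j:ℚ)*(d:ℚ)*(d:ℚ)*X0*Y0 + (-8:ℚ)*(j:ℚ)*(j:ℚ)*(j:ℚ)*X0*Y0 + (-4:ℚ)*(j:ℚ)*(j:ℚ)*(j:ℚ)*(d:ℚ)*X0*Y0)*h5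

noncomputable def fQ (a k T j : ℕ) : ℚ :=
  ((a:ℚ)+1+2*j) * ((2*T+a+1).choose (T-j) : ℚ) * ((a+j).choose k : ℚ) * ((j+k).choose k : ℚ)

noncomputable def gQ (a k T j : ℕ) : ℚ :=
  (2*(T:ℚ)+a+2) * (2*(T:ℚ)+a+3) * j * ((j:ℚ)+a-k) *
    ((2*T+a+1).choose (T-j) : ℚ) * ((a+j).choose k : ℚ) * ((j+k).choose k : ℚ) / ((T:ℚ)+1-j)

lemma certj (a k T j : ℕ) (hj : j < T) :
    (2*(T:ℚ)+a+2)*(2*(T:ℚ)+a+3) * fQ a k T j - ((T:ℚ)+1)*((T:ℚ)+a+1-k) * fQ a k (T+1) j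
      = gQ a k T (j+1) - gQ a k T j := by
  obtain ⟨d, rfl⟩ : ∃ d, T = j + d + 1 := ⟨T - j - 1, by omega⟩
  simp only [fQ, gQ,
    show j + d + 1 - j = d + 1 by omega,
    show j + d + 1 + 1 - j = d + 2 by omega,
    show j + d + 1 - (j + 1) = d by omega,
    show 2 * (j + d + 1) + a + 1 = 2*j+2*d+a+3 by ring,
    show 2 * (j + d + 1 + 1) + a + 1 = 2*j+2*d+a+5 by ring,
    show a + (j + 1) = a + j + 1 by ring,
    show j + 1 + k = j + k + 1 by ring]
  have H := certP a k j d
  have hd1 : ((d:ℚ)+1) ≠ 0 := by positivity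
  have hd2 : ((d:ℚ)+2) ≠ 0 := by positivity
  push_cast
  rw [show ((j:ℚ) + d + 1 + 1 - (j + 1) : ℚ) = (d:ℚ)+1 by ring,
      show ((j:ℚ) + d + 1 + 1 - j : ℚ) = (d:ℚ)+2 by ring,
      div_sub_div _ _ hd1 hd2, eq_div_iff (by positivity)]
  linear_combination H

lemma bnd (a k T : ℕ) :
    gQ a k T T + (2*(T:ℚ)+a+2)*(2*(T:ℚ)+a+3) * fQ a k T T
      = ((T:ℚ)+1)*((T:ℚ)+a+1-k) * (fQ a k (T+1) T + fQ a k (T+1) (T+1)) := by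
  simp only [fQ, gQ, Nat.sub_self,
    show T + 1 - T = 1 by omega,
    show a + (T + 1) = a + T + 1 by ring,
    show T + 1 + k = T + k + 1 by ring,
    Nat.choose_zero_right, Nat.choose_one_right]
  have h4 := lemA (a+T) k
  have h5 := lemA (T+k) k
  set Y0 := ((a+T).choose k : ℚ) with hY0
  set Y1 := ((a+T+1).choose k : ℚ) with hY1
  set Z0 := ((T+k).choose k : ℚ) with hZ0
  set Z1 := ((T+k+1).choose k : ℚ) with hZ1
  push_cast at h4 h5 ⊢
  rw [show ((T:ℚ) + 1 - T : ℚ) = 1 by ring, div_one]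
  linear_combination (-((T:ℚ)+1)*(2*(T:ℚ)+a+3)*Z1)*h4 + (-(2*(T:ℚ)+a+3)*((a:ℚ)+T+1)*Y0)*h5

lemma key (a k T : ℕ) :
    ∑ j ∈ Finset.range (T+1), fQ a k T j
      = (2*(T:ℚ)+a+1) * ((2*T+a).choose T : ℚ) * ((T+a).choose k : ℚ) := by
  induction T with
  | zero =>
      simp [fQ]
  | succ T ih =>
      have hargs1 : 2*(T+1)+a = 2*T+a+2 := by ring
      have hargs2 : T+1+a = T+a+1 := by ring
      rw [hargs1, hargs2]
      by_cases hk : k = T + a + 1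
      · subst hk
        rw [Finset.sum_range_succ]
        have hzero : ∑ j ∈ Finset.range (T+1), fQ a (T+a+1) (T+1) j = 0 := by
          apply Finset.sum_eq_zero
          intro j hj
          have hj' : j < T + 1 := Finset.mem_range.mp hj
          have hz : (a + j).choose (T+a+1) = 0 := Nat.choose_eq_zero_of_lt (by omega)
          simp [fQ, hz]
        rw [hzero, zero_add]
        simp only [fQ, Nat.sub_self, Nat.choose_zero_right,
          show a + (T+1) = T + a + 1 by ring]
        rw [Nat.choose_self]
        have hsymm : (T + 1 + (T + a + 1)).choose (T+a+1) = (2*T+a+2).choose (T+1) := by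
          rw [show T + 1 + (T + a + 1) = 2*T+a+2 by ring]
          rw [← Nat.choose_symm (by omega : T+1 ≤ 2*T+a+2)]
          congr 1
          omega
        rw [hsymm]
        push_cast
        ring
      · have hc : ((T:ℚ)+1)*((T:ℚ)+a+1-k) ≠ 0 := by
          apply mul_ne_zero (by positivity)
          intro h
          apply hk
          have hq : (k:ℚ) = ((T:ℚ)+a+1) := by linarith
          exact_mod_cast hq
        have tel : ∑ j ∈ Finset.range T,
            ((2*(T:ℚ)+a+2)*(2*(T:ℚ)+a+3) * fQ a k T j
              - ((T:ℚ)+1)*((T:ℚ)+a+1-k) * fQ a k (T+1) j)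
            = gQ a k T T - gQ a k T 0 := by
          rw [← Finset.sum_range_sub (gQ a k T) T]
          exact Finset.sum_congr rfl fun j hj => certj a k T j (Finset.mem_range.mp hj)
        have g0 : gQ a k T 0 = 0 := by simp [gQ]
        rw [g0, sub_zero, Finset.sum_sub_distrib, ← Finset.mul_sum, ← Finset.mul_sum] at tel
        have hb := bnd a k T
        have main : ((T:ℚ)+1)*((T:ℚ)+a+1-k) * ∑ j ∈ Finset.range (T+2), fQ a k (T+1) j
            = (2*(T:ℚ)+a+2)*(2*(T:ℚ)+a+3) * ∑ j ∈ Finset.range (T+1), fQ a k T j := by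
          rw [Finset.sum_range_succ, Finset.sum_range_succ (fQ a k (T+1)),
              Finset.sum_range_succ (fQ a k T)]
          linear_combination -tel - hb
        rw [ih] at main
        apply mul_left_cancel₀ hc
        rw [main]
        -- ratio identity
        have hA1 : ((2*(T:ℚ)+a+2)) * ((2*T+a+1).choose T : ℚ)
            = ((2*T+a+2).choose (T+1) : ℚ) * ((T:ℚ)+1) := by
          have hcast : ((2*T+a+1+1) * ((2*T+a+1).choose T) : ℕ)
              = (((2*T+a+2).choose (T+1)) * (T+1) : ℕ) := by
            simpa [Nat.succ_eq_add_one] using Nat.add_one_mul_choose_eq (2*T+a+1) T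
          have hq := congrArg (Nat.cast (R := ℚ)) hcast
          push_cast at hq
          linarith [hq]
        have hA2 := lemA (2*T+a) T
        have hA3 := lemA (T+a) k
        push_cast at hA2 hA3 ⊢
        linear_combination ((2*(T:ℚ)+a+3)*((T:ℚ)+a+1-k)*((T+a+1).choose k : ℚ))*hA1
          - ((2*(T:ℚ)+a+3)*(2*(T:ℚ)+a+2)*(((2*T+a+1).choose T : ℚ)))*hA3
          - ((2*(T:ℚ)+a+3)*(2*(T:ℚ)+a+2)*(((T+a).choose k : ℚ)))*hA2

/-- For `ε ∈ {0,1}`, `r, s, T ∈ ℕ` and `2ℓ := 2T+s+1+ε`, the sum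
`Σ_{j=0}^{T} ((s+1+ε+2j)/(2ℓ))·C(2ℓ,T-j)·C(r+s,s)·C(s+ε+j,r+s)·C(j+r+s,r+s)`
equals `(2ℓ-1)!/(T!·(T+ε-r)!·r!·s!)` when `T+ε ≥ r`, and `0` otherwise. -/
theorem stmt8 (ε r s T : ℕ) (hε : ε ≤ 1) :
    ∑ j ∈ Finset.range (T + 1),
        (((s : ℚ) + 1 + ε + 2 * j) / ((2 * T + s + 1 + ε : ℕ) : ℚ)) *
          (Nat.choose (2 * T + s + 1 + ε) (T - j) : ℚ) * (Nat.choose (r + s) s : ℚ) *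
          (Nat.choose (s + ε + j) (r + s) : ℚ) * (Nat.choose (j + r + s) (r + s) : ℚ) =
      if r ≤ T + ε then
        (Nat.factorial (2 * T + s + ε) : ℚ) /
          ((Nat.factorial T : ℚ) * (Nat.factorial (T + ε - r) : ℚ) *
            (Nat.factorial r : ℚ) * (Nat.factorial s : ℚ))
      else 0 := by
  have hsum : ∑ j ∈ Finset.range (T + 1),
        (((s : ℚ) + 1 + ε + 2 * j) / ((2 * T + s + 1 + ε : ℕ) : ℚ)) *
          (Nat.choose (2 * T + s + 1 + ε) (T - j) : ℚ) * (Nat.choose (r + s) s : ℚ) *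
          (Nat.choose (s + ε + j) (r + s) : ℚ) * (Nat.choose (j + r + s) (r + s) : ℚ)
      = (((r+s).choose s : ℚ) * ∑ j ∈ Finset.range (T+1), fQ (s+ε) (r+s) T j)
          / (2*(T:ℚ)+s+ε+1) := by
    rw [Finset.mul_sum, Finset.sum_div]
    apply Finset.sum_congr rfl
    intro j hj
    simp only [fQ,
      show 2*T+s+1+ε = 2*T+(s+ε)+1 by omega,
      show j+r+s = j+(r+s) by omega,
      show s+ε+j = (s+ε)+j by omega]
    push_cast
    ring
  rw [hsum, key]
  have hNne : (2*(T:ℚ)+s+ε+1) ≠ 0 := by positivity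
  by_cases hr : r ≤ T + ε
  · rw [if_pos hr]
    have e1 : ((2*T+(s+ε)).choose T : ℚ)
        = ((2*T+s+ε).factorial : ℚ) / ((T.factorial : ℚ) * ((T+s+ε).factorial : ℚ)) := by
      rw [show 2*T+(s+ε) = 2*T+s+ε by omega,
          Nat.cast_choose ℚ (show T ≤ 2*T+s+ε by omega),
          show 2*T+s+ε-T = T+s+ε by omega]
    have e2 : ((T+(s+ε)).choose (r+s) : ℚ)
        = ((T+s+ε).factorial : ℚ) / (((r+s).factorial : ℚ) * ((T+ε-r).factorial : ℚ)) := by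
      rw [show T+(s+ε) = T+s+ε by omega,
          Nat.cast_choose ℚ (show r+s ≤ T+s+ε by omega),
          show T+s+ε-(r+s) = T+ε-r by omega]
    have e3 : ((r+s).choose s : ℚ)
        = ((r+s).factorial : ℚ) / ((s.factorial : ℚ) * (r.factorial : ℚ)) := by
      rw [Nat.cast_choose ℚ (show s ≤ r+s by omega),
          show r+s-s = r by omega]
    rw [e1, e2, e3]
    have n1 : ((2*T+s+ε).factorial : ℚ) ≠ 0 := by exact_mod_cast Nat.factorial_ne_zero _
    have n2 : ((T.factorial) : ℚ) ≠ 0 := by exact_mod_cast Nat.factorial_ne_zero _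
    have n3 : (((T+s+ε).factorial) : ℚ) ≠ 0 := by exact_mod_cast Nat.factorial_ne_zero _
    have n4 : (((r+s).factorial) : ℚ) ≠ 0 := by exact_mod_cast Nat.factorial_ne_zero _
    have n5 : (((T+ε-r).factorial) : ℚ) ≠ 0 := by exact_mod_cast Nat.factorial_ne_zero _
    have n6 : ((s.factorial) : ℚ) ≠ 0 := by exact_mod_cast Nat.factorial_ne_zero _
    have n7 : ((r.factorial) : ℚ) ≠ 0 := by exact_mod_cast Nat.factorial_ne_zero _
    field_simp
    push_cast
    ring
  · rw [if_neg hr]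
    have hz : (T+(s+ε)).choose (r+s) = 0 := Nat.choose_eq_zero_of_lt (by omega)
    rw [hz]
    push_cast
    ring
end

section
/- Define, for integers ℓ, m ≥ 0, the rational numbers A_{ℓ,m} := (m/ℓ)·C(2ℓ, ℓ−m) if ℓ ≥ 1 (so A_{ℓ,m} = 0 when m = 0 or m > ℓ), A_{0,0} := 1 and A_{0,m} := 0 for m ≥ 1; and B_{m,ℓ} := (−1)^{m−ℓ}·C(m+ℓ−1, m−ℓ) for 0 ≤ ℓ ≤ m (with B_{0,0} := 1), and B_{m,ℓ} := 0 for ℓ > m. Then B is the inverse of the unitriangular matrix A: for all integers m, ℓ' ≥ 0, Σ_{ℓ=0}^{m} B_{m,ℓ}·A_{ℓ,ℓ'} = 1 if m = ℓ' and = 0 otherwise. -/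
/-!
For `ℓ ≥ 1` the entry `A_{ℓ,k}` is the ballot number `C(2ℓ-1, ℓ+k-1) - C(2ℓ-1, ℓ+k)`, and for
`ℓ ≥ 1` the entry `B_{m,ℓ}` is `±C(m+ℓ-1, 2ℓ-1)`; in these forms two applications of Pascal's
rule give the recurrences
`A_{ℓ+1,k+1} = A_{ℓ,k} + 2 A_{ℓ,k+1} + A_{ℓ,k+2}` and
`B_{m+2,ℓ+1} = B_{m+1,ℓ} - 2 B_{m+1,ℓ+1} - B_{m,ℓ+1}`.
Substituting both into the product `BA` makes the middle terms cancel, leaving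
`(BA)_{m+2,k+1} = (BA)_{m+1,k} + (BA)_{m+1,k+2} - (BA)_{m,k+1}`, a recurrence the identity matrix
also satisfies. Since `BA` agrees with the identity on its first two rows and on its first
column, induction on `m` finishes the proof.
-/

/-- The matrix `A`: `A_{ℓ,m} = (m/ℓ)·C(2ℓ,ℓ-m)` for `ℓ ≥ 1` and `m ≤ ℓ`
(so `A_{ℓ,m} = 0` when `m = 0` or `m > ℓ`), with `A_{0,0} = 1` and `A_{0,m} = 0` for `m ≥ 1`. -/
def Amat (ℓ m : ℕ) : ℚ :=
  if ℓ = 0 then (if m = 0 then 1 else 0)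
  else if ℓ < m then 0
  else (m : ℚ) / (ℓ : ℚ) * (Nat.choose (2 * ℓ) (ℓ - m) : ℚ)

/-- The matrix `B`: `B_{m,ℓ} = (-1)^{m-ℓ}·C(m+ℓ-1,m-ℓ)` for `ℓ ≤ m`
(in particular `B_{0,0} = 1`), and `B_{m,ℓ} = 0` for `ℓ > m`. -/
def Bmat (m ℓ : ℕ) : ℚ :=
  if m < ℓ then 0 else (-1 : ℚ) ^ (m - ℓ) * (Nat.choose (m + ℓ - 1) (m - ℓ) : ℚ)

open Finset

lemma Nat.choose_add_two_add_two (n k : ℕ) :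
    (n + 2).choose (k + 2) = n.choose k + 2 * n.choose (k + 1) + n.choose (k + 2) := by
  rw [Nat.choose_succ_succ', Nat.choose_succ_succ', Nat.choose_succ_succ']
  ring

lemma Amat_zero_left_succ (k : ℕ) : Amat 0 (k + 1) = 0 := by
  simp [Amat]

lemma Amat_succ_zero (ℓ : ℕ) : Amat (ℓ + 1) 0 = 0 := by
  simp [Amat]

lemma Amat_succ_eq_choose_sub_choose (n k : ℕ) :
    Amat (n + 1) k = (2 * n + 1).choose (n + k) - (2 * n + 1).choose (n + k + 1) := by
  rcases lt_or_ge (n + 1) k with h | h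
  · rw [Amat, if_neg n.succ_ne_zero, if_pos h, Nat.choose_eq_zero_of_lt (by omega),
      Nat.choose_eq_zero_of_lt (by omega)]
    simp
  have hsymm : (2 * (n + 1)).choose (n + 1 - k) = (2 * n + 1 + 1).choose (n + k + 1) :=
    Nat.choose_symm_of_eq_add (by omega)
  have h₁ : ((2 * n + 1 + 1 : ℕ) : ℚ) * (2 * n + 1).choose (n + k)
      = (2 * n + 1 + 1).choose (n + k + 1) * ((n + k + 1 : ℕ) : ℚ) := by
    exact_mod_cast Nat.add_one_mul_choose_eq (2 * n + 1) (n + k)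
  have h₂ : ((2 * n + 1).choose (n + k + 1) : ℚ) * ((2 * n + 1 + 1 : ℕ) : ℚ)
      = (2 * n + 1 + 1).choose (n + k + 1) * ((n + 1 - k : ℕ) : ℚ) := by
    rw [← show 2 * n + 1 + 1 - (n + k + 1) = n + 1 - k by omega]
    exact_mod_cast Nat.choose_mul_succ_eq (2 * n + 1) (n + k + 1)
  rw [Nat.cast_sub h] at h₂
  rw [Amat, if_neg n.succ_ne_zero, if_neg (by omega), hsymm]
  push_cast at h₁ h₂ ⊢
  field_simp
  linear_combination (h₂ - h₁) / 2

lemma Amat_succ_succ (ℓ k : ℕ) :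
    Amat (ℓ + 1) (k + 1) = Amat ℓ k + 2 * Amat ℓ (k + 1) + Amat ℓ (k + 2) := by
  rcases ℓ with _ | n
  · rcases k with _ | k <;> simp [Amat]
  have h₁ := Nat.choose_add_two_add_two (2 * n + 1) (n + k)
  have h₂ := Nat.choose_add_two_add_two (2 * n + 1) (n + k + 1)
  simp only [Amat_succ_eq_choose_sub_choose]
  ring_nf at h₁ h₂ ⊢
  push_cast [h₁, h₂]
  ring

lemma Bmat_of_lt {m ℓ : ℕ} (h : m < ℓ) : Bmat m ℓ = 0 := by
  simp [Bmat, h]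

lemma Bmat_succ_zero (m : ℕ) : Bmat (m + 1) 0 = 0 := by
  simp [Bmat]

lemma Bmat_succ_right (m ℓ : ℕ) :
    Bmat m (ℓ + 1) = (-1) ^ (m + ℓ + 1) * (m + ℓ).choose (2 * ℓ + 1) := by
  rcases lt_or_ge m (ℓ + 1) with h | h
  · rw [Bmat_of_lt h, Nat.choose_eq_zero_of_lt (by omega), Nat.cast_zero, mul_zero]
  obtain ⟨d, rfl⟩ := Nat.exists_eq_add_of_le h
  have hsign : (-1 : ℚ) ^ (ℓ + 1 + d + ℓ + 1) = (-1) ^ d := by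
    rw [show ℓ + 1 + d + ℓ + 1 = d + 2 * (ℓ + 1) by ring, pow_add, pow_mul, neg_one_sq, one_pow,
      mul_one]
  rw [Bmat, if_neg (by omega), hsign, show ℓ + 1 + d - (ℓ + 1) = d by omega,
    show ℓ + 1 + d + (ℓ + 1) - 1 = d + (2 * ℓ + 1) by omega,
    show ℓ + 1 + d + ℓ = d + (2 * ℓ + 1) by omega, Nat.choose_symm_add]

lemma Bmat_succ_succ (m ℓ : ℕ) :
    Bmat (m + 2) (ℓ + 1) = Bmat (m + 1) ℓ - 2 * Bmat (m + 1) (ℓ + 1) - Bmat m (ℓ + 1) := by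
  rcases ℓ with _ | j
  · simp only [Bmat_succ_right, Bmat_succ_zero, mul_zero, zero_add, add_zero, Nat.choose_one_right]
    push_cast
    ring
  have h₁ := Nat.choose_add_two_add_two (m + j + 1) (2 * j + 1)
  have h₂ := Nat.choose_succ_succ' (m + j + 1) (2 * j + 2)
  simp only [Bmat_succ_right]
  ring_nf at h₁ h₂ ⊢
  push_cast [h₁, h₂]
  ring

def prodBA (m k : ℕ) : ℚ := ∑ ℓ ∈ range (m + 1), Bmat m ℓ * Amat ℓ k

lemma sum_Bmat_succ_mul_Amat_succ {n M : ℕ} (h : n ≤ M) (k : ℕ) :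
    ∑ ℓ ∈ range M, Bmat n (ℓ + 1) * Amat (ℓ + 1) (k + 1) = prodBA n (k + 1) := by
  have hsub : ∑ ℓ ∈ range (M + 1), Bmat n ℓ * Amat ℓ (k + 1) = prodBA n (k + 1) := by
    refine (sum_subset (range_subset_range.mpr (by omega)) fun ℓ hM hn => ?_).symm
    rw [Bmat_of_lt (by simp at hn; omega), zero_mul]
  rw [← hsub, sum_range_succ', Amat_zero_left_succ, mul_zero, add_zero]

lemma prodBA_add_two_succ (m k : ℕ) :
    prodBA (m + 2) (k + 1) = prodBA (m + 1) k + prodBA (m + 1) (k + 2) - prodBA m (k + 1) := by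
  calc prodBA (m + 2) (k + 1)
      = ∑ ℓ ∈ range (m + 2), Bmat (m + 2) (ℓ + 1) * Amat (ℓ + 1) (k + 1) :=
        (sum_Bmat_succ_mul_Amat_succ (by omega) k).symm
    _ = ∑ ℓ ∈ range (m + 2), Bmat (m + 1) ℓ * Amat (ℓ + 1) (k + 1)
          - 2 * ∑ ℓ ∈ range (m + 2), Bmat (m + 1) (ℓ + 1) * Amat (ℓ + 1) (k + 1)
          - ∑ ℓ ∈ range (m + 2), Bmat m (ℓ + 1) * Amat (ℓ + 1) (k + 1) := by
        rw [mul_sum, ← sum_sub_distrib, ← sum_sub_distrib]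
        exact sum_congr rfl fun ℓ _ => by rw [Bmat_succ_succ]; ring
    _ = (prodBA (m + 1) k + 2 * prodBA (m + 1) (k + 1) + prodBA (m + 1) (k + 2))
          - 2 * prodBA (m + 1) (k + 1) - prodBA m (k + 1) := by
        rw [sum_Bmat_succ_mul_Amat_succ (by omega), sum_Bmat_succ_mul_Amat_succ (by omega)]
        simp only [prodBA, Amat_succ_succ, mul_add, sum_add_distrib, mul_sum]
        ring_nf
    _ = _ := by ring

lemma prodBA_eq (m k : ℕ) : prodBA m k = if m = k then 1 else 0 := by
  induction m using Nat.twoStepInduction generalizing k with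
  | zero => rcases k with _ | k <;> simp [prodBA, Bmat, Amat]
  | one => rcases k with _ | _ | k <;> simp [prodBA, sum_range_succ, Bmat, Amat]
  | more m ih ih₁ =>
    rcases k with _ | k
    · refine (sum_eq_zero fun ℓ _ => ?_).trans (if_neg (by omega)).symm
      rcases ℓ with _ | ℓ
      · rw [Bmat_succ_zero, zero_mul]
      · rw [Amat_succ_zero, mul_zero]
    · rw [prodBA_add_two_succ, ih₁, ih₁, ih]
      split_ifs <;> (try norm_num) <;> omega

/-- `B` is the inverse of the unitriangular matrix `A`:
`Σ_{ℓ=0}^{m} B_{m,ℓ}·A_{ℓ,ℓ'} = δ_{m,ℓ'}`. -/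
theorem stmt9 (m ℓ' : ℕ) :
    ∑ ℓ ∈ Finset.range (m + 1), Bmat m ℓ * Amat ℓ ℓ' = if m = ℓ' then 1 else 0 :=
  prodBA_eq m ℓ'
end

section
/- (Dilaton-like equation for p_{k,e}.) For every k ∈ ℕ, every e ∈ ℤ and every m ∈ ℚ: k·p_{k,e+2}(m) = k·p_{k,e}(m) + (k−e)·p_{k−1,e}(m), with the convention p_{−1,e} := 0. -/
/-- `p_{k,e}(m) = binom(m+e/2-1,k)·binom(m-e/2+k,k)`. -/
def pke (k : ℕ) (e : ℤ) (m : ℚ) : ℚ :=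
  qbinom (m + (e : ℚ) / 2 - 1) k * qbinom (m - (e : ℚ) / 2 + k) k

lemma Qleft (x : ℚ) (n : ℕ) :
    ∏ i ∈ Finset.range (n + 1), (x - i) = x * ∏ i ∈ Finset.range n, (x - 1 - i) := by
  rw [Finset.prod_range_succ', mul_comm]
  congr 1
  · norm_num
  · apply Finset.prod_congr rfl
    intro i _
    push_cast
    ring

/-- Dilaton-like equation for `p_{k,e}`:
`k·p_{k,e+2}(m) = k·p_{k,e}(m) + (k-e)·p_{k-1,e}(m)` (with `p_{-1,e} := 0`). -/
theorem stmt11 (k : ℕ) (e : ℤ) (m : ℚ) :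
    (k : ℚ) * pke k (e + 2) m =
      (k : ℚ) * pke k e m + ((k : ℚ) - (e : ℚ)) * (if k = 0 then 0 else pke (k - 1) e m) := by
  cases k with
  | zero => simp [pke]
  | succ n =>
    have hne : (n.factorial : ℚ) ≠ 0 := by exact_mod_cast n.factorial_ne_zero
    have hn1 : ((n : ℚ) + 1) ≠ 0 := by positivity
    simp only [pke, qbinom, Nat.succ_sub_one, if_neg (Nat.succ_ne_zero n),
      Nat.factorial_succ]
    push_cast
    rw [Qleft (m + ((e : ℚ) + 2) / 2 - 1) n,
        Finset.prod_range_succ (fun i => m - ((e : ℚ) + 2) / 2 + ((n : ℚ) + 1) - i),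
        Finset.prod_range_succ (fun i => m + (e : ℚ) / 2 - 1 - i),
        Qleft (m - (e : ℚ) / 2 + ((n : ℚ) + 1)) n]
    have h1 : ∏ i ∈ Finset.range n, (m + ((e : ℚ) + 2) / 2 - 1 - 1 - i)
        = ∏ i ∈ Finset.range n, (m + (e : ℚ) / 2 - 1 - i) := by
      apply Finset.prod_congr rfl; intro i _; ring
    have h2 : ∏ i ∈ Finset.range n, (m - ((e : ℚ) + 2) / 2 + ((n : ℚ) + 1) - i)
        = ∏ i ∈ Finset.range n, (m - (e : ℚ) / 2 + (n : ℚ) - i) := by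
      apply Finset.prod_congr rfl; intro i _; ring
    have h3 : ∏ i ∈ Finset.range n, (m - (e : ℚ) / 2 + ((n : ℚ) + 1) - 1 - i)
        = ∏ i ∈ Finset.range n, (m - (e : ℚ) / 2 + (n : ℚ) - i) := by
      apply Finset.prod_congr rfl; intro i _; ring
    rw [h1, h2, h3]
    set A := ∏ i ∈ Finset.range n, (m + (e : ℚ) / 2 - 1 - i) with hA
    set B := ∏ i ∈ Finset.range n, (m - (e : ℚ) / 2 + (n : ℚ) - i) with hB
    field_simp
    ring
end

section
/- (Relations for the quasi-polynomials π.) For all r, s ∈ ℕ, every ε ∈ ℤ and every half-integer m (2m ∈ ℤ), with the conventions π^{(·)}_{−1,·} = π^{(·)}_{·,−1} := 0: (i) s·π^{(ε)}_{r,s}(m) = (r+1)·π^{(ε+1)}_{r+1,s−1}(m); (ii) π^{(1)}_{r,s}(m) = π^{(−1)}_{r,s}(m) + π^{(−1)}_{r−1,s}(m); (iii) s·π^{(1)}_{r,s}(m) = (r+1)·π^{(0)}_{r+1,s−1}(m) + r·π^{(0)}_{r,s−1}(m). -/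
open Classical in
/-- `π^{(ε)}_{r,s}(m) = C(r+s,s)·p_{r+s,s+1+ε}(m)` if `m-(s+1+ε)/2 ∈ ℤ`, and `0` otherwise. -/
noncomputable def piQ (r s : ℕ) (ε : ℤ) (m : ℚ) : ℚ :=
  if ∃ z : ℤ, m - ((s : ℚ) + 1 + (ε : ℚ)) / 2 = (z : ℚ) then
    (Nat.choose (r + s) s : ℚ) * pke (r + s) ((s : ℤ) + 1 + ε) m
  else 0

lemma succ_mul_qbinom_succ (x : ℚ) (k : ℕ) :
    ((k : ℚ) + 1) * qbinom x (k + 1) = (x - k) * qbinom x k := by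
  unfold qbinom
  rw [Finset.prod_range_succ, Nat.factorial_succ]
  push_cast
  field_simp

lemma succ_mul_qbinom_succ_eq_mul_qbinom_sub_one (x : ℚ) (k : ℕ) :
    ((k : ℚ) + 1) * qbinom x (k + 1) = x * qbinom (x - 1) k := by
  unfold qbinom
  rw [Finset.prod_range_succ', Nat.factorial_succ]
  have hshift : ∏ i ∈ Finset.range k, (x - ((i + 1 : ℕ) : ℚ)) =
      ∏ i ∈ Finset.range k, (x - 1 - (i : ℚ)) :=
    Finset.prod_congr rfl fun i _ => by push_cast; ring
  rw [hshift]
  push_cast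
  field_simp
  ring

lemma qbinom_succ_succ (x : ℚ) (k : ℕ) :
    qbinom (x + 1) (k + 1) = qbinom x k + qbinom x (k + 1) := by
  apply mul_left_cancel₀ (by positivity : ((k : ℚ) + 1) ≠ 0)
  rw [mul_add, succ_mul_qbinom_succ_eq_mul_qbinom_sub_one, add_sub_cancel_right,
    succ_mul_qbinom_succ]
  ring

lemma succ_mul_qbinom_mul_qbinom (n : ℕ) (e x y : ℚ) (hxy : y - x = (n : ℚ) + 1 - e) :
    ((n : ℚ) + 1) * (qbinom x (n + 1) * qbinom (y - 1) (n + 1)) =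
      ((n : ℚ) + 1) * (qbinom (x - 1) (n + 1) * qbinom y (n + 1)) +
        ((n : ℚ) + 1 - e) * (qbinom (x - 1) n * qbinom (y - 1) n) := by
  have hpx := qbinom_succ_succ (x - 1) n
  have hpy := qbinom_succ_succ (y - 1) n
  rw [sub_add_cancel] at hpx hpy
  linear_combination ((n : ℚ) + 1) * qbinom (y - 1) (n + 1) * hpx -
    ((n : ℚ) + 1) * qbinom (x - 1) (n + 1) * hpy +
    qbinom (x - 1) n * succ_mul_qbinom_succ (y - 1) n -
    qbinom (y - 1) n * succ_mul_qbinom_succ (x - 1) n +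
    qbinom (x - 1) n * qbinom (y - 1) n * hxy

lemma succ_mul_pke_succ_add_two (n : ℕ) (e : ℤ) (m : ℚ) :
    ((n : ℚ) + 1) * pke (n + 1) (e + 2) m =
      ((n : ℚ) + 1) * pke (n + 1) e m + ((n : ℚ) + 1 - e) * pke n e m := by
  have h := succ_mul_qbinom_mul_qbinom n e (m + e / 2) (m - e / 2 + n + 1) (by ring)
  unfold pke
  push_cast
  ring_nf
  ring_nf at h
  linear_combination h

lemma pke_self_add_two (k : ℕ) (m : ℚ) : pke k ((k : ℤ) + 2) m = pke k k m := by
  unfold pke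
  rw [mul_comm]
  congr 2 <;> push_cast <;> ring

open Classical in
lemma piQ_eq_ite (r s : ℕ) (ε : ℤ) (m : ℚ) :
    piQ r s ε m = if ∃ z : ℤ, m - (((s : ℤ) + 1 + ε : ℤ) : ℚ) / 2 = z then
      ((r + s).choose s : ℚ) * pke (r + s) ((s : ℤ) + 1 + ε) m else 0 := by
  simp only [piQ, Int.cast_add, Int.cast_natCast, Int.cast_one]

lemma exists_int_eq_sub_add_two_div_two_iff (m : ℚ) (e : ℤ) :
    (∃ z : ℤ, m - ((e + 2 : ℤ) : ℚ) / 2 = z) ↔ ∃ z : ℤ, m - (e : ℚ) / 2 = z := by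
  push_cast
  constructor
  · rintro ⟨z, hz⟩
    exact ⟨z + 1, by push_cast; linarith⟩
  · rintro ⟨z, hz⟩
    exact ⟨z - 1, by push_cast; linarith⟩

lemma succ_mul_piQ_succ (r s : ℕ) (ε : ℤ) (m : ℚ) :
    ((s : ℚ) + 1) * piQ r (s + 1) ε m = ((r : ℚ) + 1) * piQ (r + 1) s (ε + 1) m := by
  have he : ((s + 1 : ℕ) : ℤ) + 1 + ε = (s : ℤ) + 1 + (ε + 1) := by push_cast; ring
  have hchoose : ((r + s + 1).choose (s + 1) : ℚ) * (s + 1) = (r + s + 1).choose s * (r + 1) := by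
    have h := Nat.choose_succ_right_eq (r + s + 1) s
    rw [show r + s + 1 - s = r + 1 by omega] at h
    exact_mod_cast h
  rw [piQ_eq_ite, piQ_eq_ite, he, show r + (s + 1) = r + s + 1 by omega,
    show r + 1 + s = r + s + 1 by omega]
  split_ifs
  · linear_combination pke (r + s + 1) ((s : ℤ) + 1 + (ε + 1)) m * hchoose
  · ring

lemma piQ_zero_one (s : ℕ) (m : ℚ) : piQ 0 s 1 m = piQ 0 s (-1) m := by
  rw [piQ_eq_ite, piQ_eq_ite, show (s : ℤ) + 1 + 1 = s + 2 by ring,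
    show (s : ℤ) + 1 + -1 = s by ring, exists_int_eq_sub_add_two_div_two_iff, zero_add,
    pke_self_add_two]

lemma piQ_succ_one (r s : ℕ) (m : ℚ) :
    piQ (r + 1) s 1 m = piQ (r + 1) s (-1) m + piQ r s (-1) m := by
  have hchoose : ((r + s).choose s : ℚ) * (r + s + 1) = (r + s + 1).choose s * (r + 1) := by
    have h := Nat.choose_mul_succ_eq (r + s) s
    rw [show r + s + 1 - s = r + 1 by omega] at h
    exact_mod_cast h
  have hpke := succ_mul_pke_succ_add_two (r + s) s m
  push_cast at hpke
  rw [piQ_eq_ite, piQ_eq_ite, piQ_eq_ite, show (s : ℤ) + 1 + 1 = s + 2 by ring,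
    show (s : ℤ) + 1 + -1 = s by ring, exists_int_eq_sub_add_two_div_two_iff,
    show r + 1 + s = r + s + 1 by omega]
  split_ifs
  · apply mul_left_cancel₀ (by positivity : ((r : ℚ) + s + 1) ≠ 0)
    linear_combination ((r + s + 1).choose s : ℚ) * hpke - pke (r + s) s m * hchoose
  · ring

theorem stmt12_general (r s : ℕ) (ε : ℤ) (m : ℚ) :
    ((s : ℚ) * piQ r s ε m =
      (if s = 0 then 0 else ((r : ℚ) + 1) * piQ (r + 1) (s - 1) (ε + 1) m)) ∧
    (piQ r s 1 m = piQ r s (-1) m + (if r = 0 then 0 else piQ (r - 1) s (-1) m)) ∧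
    ((s : ℚ) * piQ r s 1 m =
      (if s = 0 then 0
       else ((r : ℚ) + 1) * piQ (r + 1) (s - 1) 0 m + (r : ℚ) * piQ r (s - 1) 0 m)) := by
  refine ⟨?_, ?_, ?_⟩
  · rcases s with _ | s
    · simp
    · simpa using succ_mul_piQ_succ r s ε m
  · rcases r with _ | r
    · simpa using piQ_zero_one s m
    · simpa using piQ_succ_one r s m
  · rcases s with _ | s
    · simp
    · have hi := succ_mul_piQ_succ r s (-1) m
      rw [neg_add_cancel] at hi
      rcases r with _ | r
      · simpa [piQ_zero_one] using hi
      · have hi' := succ_mul_piQ_succ r s (-1) m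
        rw [neg_add_cancel] at hi'
        push_cast at hi hi' ⊢
        rw [piQ_succ_one, mul_add, hi, hi']

/-- Relations for the quasi-polynomials `π`:
(i)  `s·π^{(ε)}_{r,s}(m) = (r+1)·π^{(ε+1)}_{r+1,s-1}(m)`,
(ii) `π^{(1)}_{r,s}(m) = π^{(-1)}_{r,s}(m) + π^{(-1)}_{r-1,s}(m)`,
(iii) `s·π^{(1)}_{r,s}(m) = (r+1)·π^{(0)}_{r+1,s-1}(m) + r·π^{(0)}_{r,s-1}(m)`,
with the conventions `π_{-1,·} = π_{·,-1} := 0`. -/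
theorem stmt12 (r s : ℕ) (ε : ℤ) (m : ℚ) (hm : ∃ z : ℤ, 2 * m = (z : ℚ)) :
    ((s : ℚ) * piQ r s ε m =
      (if s = 0 then 0 else ((r : ℚ) + 1) * piQ (r + 1) (s - 1) (ε + 1) m)) ∧
    (piQ r s 1 m = piQ r s (-1) m + (if r = 0 then 0 else piQ (r - 1) s (-1) m)) ∧
    ((s : ℚ) * piQ r s 1 m =
      (if s = 0 then 0
       else ((r : ℚ) + 1) * piQ (r + 1) (s - 1) 0 m + (r : ℚ) * piQ r (s - 1) 0 m)) :=
  stmt12_general r s ε m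
end

section
/- (Transmutation relation on I.) Let n ≥ 3, let m_1,…,m_n be half-integers, and fix j ∈ {1,…,n}. Writing r := Σ_{i=1}^n r_i and s := Σ_{i=1}^n s_i, one has Σ_{(ε,r,s) ∈ I, s ≥ 1} r!·(s−1)!·(1−ε_j)·s_j·∏_{i=1}^n π^{(ε_i)}_{r_i,s_i}(m_i) = Σ_{(ε,r,s) ∈ I, r ≥ 1} (r−1)!·s!·ε_j·r_j·∏_{i=1}^n π^{(ε_i)}_{r_i,s_i}(m_i). -/
/-- The index set `I`: triples `(ε, r, s)` with `ε ∈ {0,1}^n`, `r, s ∈ ℕ^n`, satisfying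
`Σ ε_i = Σ r_i + 1` and `Σ (1-ε_i) = Σ s_i + 2` (these conditions force `r_i, s_i < n`,
so no tuple of `I` is lost by the bound used in the ambient finite set). -/
def Iset (n : ℕ) : Finset ((Fin n → ℤ) × (Fin n → ℕ) × (Fin n → ℕ)) :=
  ((Fintype.piFinset fun _ : Fin n => ({0, 1} : Finset ℤ)) ×ˢ
      ((Fintype.piFinset fun _ : Fin n => Finset.range n) ×ˢ
        (Fintype.piFinset fun _ : Fin n => Finset.range n))).filter
    fun t => (∑ i, t.1 i) = (∑ i, (t.2.1 i : ℤ)) + 1 ∧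
      (∑ i, (1 - t.1 i)) = (∑ i, (t.2.2 i : ℤ)) + 2

/-- The index set `I^{(e₁,e₂)}`: as `I`, but with `ε_1 = e₁` and `ε_2 = e₂` fixed
(possibly equal to `-1`), and `ε_i ∈ {0,1}` for `i ≥ 3`. -/
def IsetE (n : ℕ) (e₁ e₂ : ℤ) : Finset ((Fin n → ℤ) × (Fin n → ℕ) × (Fin n → ℕ)) :=
  ((Fintype.piFinset fun _ : Fin n => ({-1, 0, 1} : Finset ℤ)) ×ˢ
      ((Fintype.piFinset fun _ : Fin n => Finset.range n) ×ˢ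
        (Fintype.piFinset fun _ : Fin n => Finset.range n))).filter
    fun t =>
      (∀ i : Fin n, (i.val = 0 → t.1 i = e₁) ∧ (i.val = 1 → t.1 i = e₂) ∧
        (2 ≤ i.val → t.1 i = 0 ∨ t.1 i = 1)) ∧
      (∑ i, t.1 i) = (∑ i, (t.2.1 i : ℤ)) + 1 ∧
      (∑ i, (1 - t.1 i)) = (∑ i, (t.2.2 i : ℤ)) + 2

/-! Moving one unit from `s_j` to `r_j` while flipping `ε_j` from `0` to `1` is a bijection
between the triples of `I` that contribute to the left side (`ε_j = 0`, `s_j ≥ 1`) and those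
that contribute to the right side (`ε_j = 1`, `r_j ≥ 1`). It turns `r!·(s-1)!` into
`(r'-1)!·s'!`, and the weights match through
`(k+1)·π^{(0)}_{r,k+1}(x) = (r+1)·π^{(1)}_{r+1,k}(x)`: both sides are multiples of the same
`p_{r+k+1,k+2}(x)` under the same parity condition, and `(k+1)·C(r+k+1,k+1) = (r+1)·C(r+k+1,k)`. -/

open Finset Function

lemma Fintype.sum_update_add_apply {ι M : Type*} [Fintype ι] [DecidableEq ι] [AddCommMonoid M]
    (f : ι → M) (j : ι) (b : M) : (∑ i, update f j b i) + f j = (∑ i, f i) + b := by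
  rw [sum_update_of_mem (mem_univ j), Fintype.sum_eq_add_sum_compl j f, compl_eq_univ_sdiff]
  abel

lemma succ_mul_piQ_zero (r k : ℕ) (x : ℚ) :
    ((k : ℚ) + 1) * piQ r (k + 1) 0 x = ((r : ℚ) + 1) * piQ (r + 1) k 1 x := by
  have hcond : ((k + 1 : ℕ) : ℚ) + 1 + ((0 : ℤ) : ℚ) = (k : ℚ) + 1 + ((1 : ℤ) : ℚ) := by
    push_cast; ring
  have hdeg : ((k + 1 : ℕ) : ℤ) + 1 + 0 = (k : ℤ) + 1 + 1 := by push_cast; ring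
  have hchoose : ((r + 1 + k).choose (k + 1) : ℚ) * ((k : ℚ) + 1) =
      ((r + 1 + k).choose k : ℚ) * ((r : ℚ) + 1) := by
    have := Nat.choose_succ_right_eq (r + 1 + k) k
    rw [show r + 1 + k - k = r + 1 by omega] at this
    exact_mod_cast this
  unfold piQ
  rw [hcond, hdeg, show r + (k + 1) = r + 1 + k by omega]
  split_ifs
  · linear_combination pke (r + 1 + k) ((k : ℤ) + 1 + 1) x * hchoose
  · ring

abbrev IndexTriple (n : ℕ) := (Fin n → ℤ) × (Fin n → ℕ) × (Fin n → ℕ)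

lemma mem_Iset_iff {n : ℕ} {t : IndexTriple n} :
    t ∈ Iset n ↔ (∀ i, t.1 i = 0 ∨ t.1 i = 1) ∧ ∑ i, t.1 i = ((∑ i, t.2.1 i : ℕ) : ℤ) + 1 ∧
      (n : ℤ) = ∑ i, t.1 i + ((∑ i, t.2.2 i : ℕ) : ℤ) + 2 := by
  simp only [Iset, mem_filter, mem_product, Fintype.mem_piFinset, mem_insert, mem_singleton,
    mem_range, sum_sub_distrib, sum_const, card_univ, Fintype.card_fin, nsmul_eq_mul, mul_one,
    Nat.cast_sum]
  constructor
  · rintro ⟨⟨hε, -, -⟩, hr, hs⟩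
    exact ⟨hε, hr, by linarith⟩
  · rintro ⟨hε, hr, hs⟩
    have hε_le : ∑ i, t.1 i ≤ n := by
      simpa using sum_le_sum fun i (_ : i ∈ univ) => (hε i).elim (·.le.trans zero_le_one) (·.le)
    have hε_nonneg : 0 ≤ ∑ i, t.1 i :=
      sum_nonneg fun i _ => (hε i).elim (·.ge) (·.ge.trans' zero_le_one)
    refine ⟨⟨hε, fun i => ?_, fun i => ?_⟩, hr, by linarith⟩
    · have : (t.2.1 i : ℤ) ≤ ∑ i, (t.2.1 i : ℤ) := by
        exact_mod_cast single_le_sum (fun _ _ => Nat.zero_le _) (mem_univ i)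
      omega
    · have : (t.2.2 i : ℤ) ≤ ∑ i, (t.2.2 i : ℤ) := by
        exact_mod_cast single_le_sum (fun _ _ => Nat.zero_le _) (mem_univ i)
      omega

section Transmutation

variable {n : ℕ} (m : Fin n → ℚ) (j : Fin n)

def transmute (t : IndexTriple n) : IndexTriple n :=
  (update t.1 j 1, update t.2.1 j (t.2.1 j + 1), update t.2.2 j (t.2.2 j - 1))

def untransmute (t : IndexTriple n) : IndexTriple n :=
  (update t.1 j 0, update t.2.1 j (t.2.1 j - 1), update t.2.2 j (t.2.2 j + 1))

variable {j} {t : IndexTriple n}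

lemma transmute_mem_Iset (ht : t ∈ Iset n) (hε : t.1 j = 0) (hs : 1 ≤ t.2.2 j) :
    transmute j t ∈ Iset n := by
  rw [mem_Iset_iff] at ht ⊢
  obtain ⟨hε01, hr_sum, hs_sum⟩ := ht
  have := Fintype.sum_update_add_apply t.1 j 1
  have := Fintype.sum_update_add_apply t.2.1 j (t.2.1 j + 1)
  have := Fintype.sum_update_add_apply t.2.2 j (t.2.2 j - 1)
  refine ⟨fun i => ?_, ?_, ?_⟩
  · rcases eq_or_ne i j with rfl | hi
    · simp [transmute]
    · simpa [transmute, hi] using hε01 i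
  · simp only [transmute]
    omega
  · simp only [transmute]
    omega

lemma untransmute_mem_Iset (ht : t ∈ Iset n) (hε : t.1 j = 1) (hr : 1 ≤ t.2.1 j) :
    untransmute j t ∈ Iset n := by
  rw [mem_Iset_iff] at ht ⊢
  obtain ⟨hε01, hr_sum, hs_sum⟩ := ht
  have := Fintype.sum_update_add_apply t.1 j 0
  have := Fintype.sum_update_add_apply t.2.1 j (t.2.1 j - 1)
  have := Fintype.sum_update_add_apply t.2.2 j (t.2.2 j + 1)
  refine ⟨fun i => ?_, ?_, ?_⟩
  · rcases eq_or_ne i j with rfl | hi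
    · simp [untransmute]
    · simpa [untransmute, hi] using hε01 i
  · simp only [untransmute]
    omega
  · simp only [untransmute]
    omega

lemma untransmute_transmute (hε : t.1 j = 0) (hs : 1 ≤ t.2.2 j) :
    untransmute j (transmute j t) = t := by
  obtain ⟨ε, r, s⟩ := t
  simp only [transmute, untransmute, update_self, update_idem, Nat.add_sub_cancel,
    Nat.sub_add_cancel hs, ← hε, update_eq_self]

lemma transmute_untransmute (hε : t.1 j = 1) (hr : 1 ≤ t.2.1 j) :
    transmute j (untransmute j t) = t := by
  obtain ⟨ε, r, s⟩ := t
  simp only [transmute, untransmute, update_self, update_idem, Nat.add_sub_cancel,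
    Nat.sub_add_cancel hr, ← hε, update_eq_self]

noncomputable def piProd (t : IndexTriple n) : ℚ := ∏ i, piQ (t.2.1 i) (t.2.2 i) (t.1 i) (m i)

noncomputable def leftTerm (j : Fin n) (t : IndexTriple n) : ℚ :=
  (∑ i, t.2.1 i).factorial * ((∑ i, t.2.2 i) - 1).factorial *
    (1 - (t.1 j : ℚ)) * t.2.2 j * piProd m t

noncomputable def rightTerm (j : Fin n) (t : IndexTriple n) : ℚ :=
  ((∑ i, t.2.1 i) - 1).factorial * (∑ i, t.2.2 i).factorial *
    (t.1 j : ℚ) * t.2.1 j * piProd m t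

lemma mul_piProd_eq_mul_piProd_transmute (hε : t.1 j = 0) (hs : 1 ≤ t.2.2 j) :
    (t.2.2 j : ℚ) * piProd m t = ((t.2.1 j : ℚ) + 1) * piProd m (transmute j t) := by
  obtain ⟨k, hk⟩ := Nat.exists_eq_add_of_le' hs
  set t' := transmute j t
  have hrest : ∏ i ∈ {j}ᶜ, piQ (t.2.1 i) (t.2.2 i) (t.1 i) (m i) =
      ∏ i ∈ {j}ᶜ, piQ (t'.2.1 i) (t'.2.2 i) (t'.1 i) (m i) :=
    prod_congr rfl fun i hi => by
      have hij : i ≠ j := by simpa using hi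
      simp [t', transmute, update_of_ne hij]
  have hj : piQ (t'.2.1 j) (t'.2.2 j) (t'.1 j) (m j) = piQ (t.2.1 j + 1) k 1 (m j) := by
    simp [t', transmute, hk]
  rw [piProd, piProd, Fintype.prod_eq_mul_prod_compl j, Fintype.prod_eq_mul_prod_compl j, hrest,
    hj, hε, hk]
  push_cast
  linear_combination (∏ i ∈ {j}ᶜ, piQ (t'.2.1 i) (t'.2.2 i) (t'.1 i) (m i)) *
    succ_mul_piQ_zero (t.2.1 j) k (m j)

lemma leftTerm_eq_rightTerm_transmute (hε : t.1 j = 0) (hs : 1 ≤ t.2.2 j) :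
    leftTerm m j t = rightTerm m j (transmute j t) := by
  have hr_sum : ∑ i, (transmute j t).2.1 i = ∑ i, t.2.1 i + 1 := by
    have := Fintype.sum_update_add_apply t.2.1 j (t.2.1 j + 1)
    simp only [transmute]
    omega
  have hs_sum : ∑ i, (transmute j t).2.2 i = ∑ i, t.2.2 i - 1 := by
    have := Fintype.sum_update_add_apply t.2.2 j (t.2.2 j - 1)
    simp only [transmute]
    omega
  have hε' : (transmute j t).1 j = 1 := update_self ..
  have hr' : (transmute j t).2.1 j = t.2.1 j + 1 := update_self ..
  rw [leftTerm, rightTerm, hr_sum, hs_sum, Nat.add_sub_cancel, hε, hε', hr']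
  push_cast
  linear_combination ((∑ i, t.2.1 i).factorial * ((∑ i, t.2.2 i) - 1).factorial : ℚ) *
    mul_piProd_eq_mul_piProd_transmute m hε hs

lemma eq_zero_and_one_le_of_leftTerm_ne_zero (ht : t ∈ Iset n) (h : leftTerm m j t ≠ 0) :
    t.1 j = 0 ∧ 1 ≤ t.2.2 j := by
  rcases (mem_Iset_iff.mp ht).1 j with hε | hε
  · refine ⟨hε, Nat.one_le_iff_ne_zero.mpr fun hs => h ?_⟩
    simp [leftTerm, hs]
  · exact absurd (by simp [leftTerm, hε]) h

lemma eq_one_and_one_le_of_rightTerm_ne_zero (ht : t ∈ Iset n) (h : rightTerm m j t ≠ 0) :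
    t.1 j = 1 ∧ 1 ≤ t.2.1 j := by
  rcases (mem_Iset_iff.mp ht).1 j with hε | hε
  · exact absurd (by simp [rightTerm, hε]) h
  · refine ⟨hε, Nat.one_le_iff_ne_zero.mpr fun hr => h ?_⟩
    simp [rightTerm, hr]

lemma sum_filter_leftTerm_eq_sum_transmutable :
    ∑ t ∈ (Iset n).filter (fun t => 1 ≤ ∑ i, t.2.2 i), leftTerm m j t =
      ∑ t ∈ (Iset n).filter (fun t => t.1 j = 0 ∧ 1 ≤ t.2.2 j), leftTerm m j t := by
  refine (sum_filter_of_ne fun t ht h => ?_).trans (sum_filter_of_ne fun t ht h => ?_).symm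
  · exact (eq_zero_and_one_le_of_leftTerm_ne_zero m ht h).2.trans
      (single_le_sum (fun _ _ => Nat.zero_le _) (mem_univ j))
  · exact eq_zero_and_one_le_of_leftTerm_ne_zero m ht h

lemma sum_filter_rightTerm_eq_sum_untransmutable :
    ∑ t ∈ (Iset n).filter (fun t => 1 ≤ ∑ i, t.2.1 i), rightTerm m j t =
      ∑ t ∈ (Iset n).filter (fun t => t.1 j = 1 ∧ 1 ≤ t.2.1 j), rightTerm m j t := by
  refine (sum_filter_of_ne fun t ht h => ?_).trans (sum_filter_of_ne fun t ht h => ?_).symm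
  · exact (eq_one_and_one_le_of_rightTerm_ne_zero m ht h).2.trans
      (single_le_sum (fun _ _ => Nat.zero_le _) (mem_univ j))
  · exact eq_one_and_one_le_of_rightTerm_ne_zero m ht h

lemma sum_transmutable_leftTerm_eq_sum_untransmutable_rightTerm :
    ∑ t ∈ (Iset n).filter (fun t => t.1 j = 0 ∧ 1 ≤ t.2.2 j), leftTerm m j t =
      ∑ t ∈ (Iset n).filter (fun t => t.1 j = 1 ∧ 1 ≤ t.2.1 j), rightTerm m j t := by
  refine sum_nbij' (transmute j) (untransmute j) ?_ ?_ ?_ ?_ ?_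
  · simp only [mem_filter]
    rintro t ⟨ht, hε, hs⟩
    exact ⟨transmute_mem_Iset ht hε hs, update_self .., by simp [transmute]⟩
  · simp only [mem_filter]
    rintro t ⟨ht, hε, hr⟩
    exact ⟨untransmute_mem_Iset ht hε hr, update_self .., by simp [untransmute]⟩
  · rintro t ht
    exact untransmute_transmute (mem_filter.mp ht).2.1 (mem_filter.mp ht).2.2
  · rintro t ht
    exact transmute_untransmute (mem_filter.mp ht).2.1 (mem_filter.mp ht).2.2
  · rintro t ht
    exact leftTerm_eq_rightTerm_transmute m (mem_filter.mp ht).2.1 (mem_filter.mp ht).2.2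

end Transmutation

theorem stmt13_general (N : ℕ) (m : Fin (N + 3) → ℚ)
    (j : Fin (N + 3)) :
    (∑ t ∈ (Iset (N + 3)).filter fun t => 1 ≤ ∑ i, t.2.2 i,
        (Nat.factorial (∑ i, t.2.1 i) : ℚ) * (Nat.factorial ((∑ i, t.2.2 i) - 1) : ℚ) *
          (1 - (t.1 j : ℚ)) * (t.2.2 j : ℚ) * ∏ i, piQ (t.2.1 i) (t.2.2 i) (t.1 i) (m i)) =
      ∑ t ∈ (Iset (N + 3)).filter fun t => 1 ≤ ∑ i, t.2.1 i,
        (Nat.factorial ((∑ i, t.2.1 i) - 1) : ℚ) * (Nat.factorial (∑ i, t.2.2 i) : ℚ) *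
          (t.1 j : ℚ) * (t.2.1 j : ℚ) * ∏ i, piQ (t.2.1 i) (t.2.2 i) (t.1 i) (m i) :=
  calc _ = ∑ t ∈ (Iset (N + 3)).filter (fun t => t.1 j = 0 ∧ 1 ≤ t.2.2 j), leftTerm m j t :=
        sum_filter_leftTerm_eq_sum_transmutable m
    _ = ∑ t ∈ (Iset (N + 3)).filter (fun t => t.1 j = 1 ∧ 1 ≤ t.2.1 j), rightTerm m j t :=
        sum_transmutable_leftTerm_eq_sum_untransmutable_rightTerm m
    _ = _ := (sum_filter_rightTerm_eq_sum_untransmutable m).symm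

/-- Transmutation relation on `I`, with `n = N+3 ≥ 3`, `m_i` half-integers, and any
index `j`: `Σ_{I, s≥1} r!·(s-1)!·(1-ε_j)·s_j·Π = Σ_{I, r≥1} (r-1)!·s!·ε_j·r_j·Π`,
where `r = Σ r_i`, `s = Σ s_i` and `Π = ∏_i π^{(ε_i)}_{r_i,s_i}(m_i)`. -/
theorem stmt13 (N : ℕ) (m : Fin (N + 3) → ℚ) (hm : ∀ i, ∃ z : ℤ, 2 * m i = (z : ℚ))
    (j : Fin (N + 3)) :
    (∑ t ∈ (Iset (N + 3)).filter fun t => 1 ≤ ∑ i, t.2.2 i,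
        (Nat.factorial (∑ i, t.2.1 i) : ℚ) * (Nat.factorial ((∑ i, t.2.2 i) - 1) : ℚ) *
          (1 - (t.1 j : ℚ)) * (t.2.2 j : ℚ) * ∏ i, piQ (t.2.1 i) (t.2.2 i) (t.1 i) (m i)) =
      ∑ t ∈ (Iset (N + 3)).filter fun t => 1 ≤ ∑ i, t.2.1 i,
        (Nat.factorial ((∑ i, t.2.1 i) - 1) : ℚ) * (Nat.factorial (∑ i, t.2.2 i) : ℚ) *
          (t.1 j : ℚ) * (t.2.1 j : ℚ) * ∏ i, piQ (t.2.1 i) (t.2.2 i) (t.1 i) (m i) :=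
  stmt13_general N m j
end

section
/- (Vanishing of the lattice count quasi-polynomial sum.) Let n ≥ 3 and let m_1,…,m_n be nonnegative half-integers (2m_i ∈ ℤ_{≥0}), and let k be the number of indices i ∈ {1,…,n} such that 2m_i is odd. If k is odd, or k = 0, or k = 2, then Σ_{(ε,r,s) ∈ I, Σs_i ≥ 1} (Σ_{i=1}^n r_i)! · (Σ_{i=1}^n ε_i s_i) · (Σ_{i=1}^n s_i − 1)! · ∏_{i=1}^n π^{(ε_i)}_{r_i,s_i}(m_i) = 0. -/
/-- Vanishing of the lattice count quasi-polynomial sum, with `n = N+3 ≥ 3` and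
`m_i = M_i/2` nonnegative half-integers. If the number `k` of indices with `2m_i` odd
is odd, or equals `0` or `2`, then
`Σ_{I, Σs≥1} r!·(Σ ε_i s_i)·(s-1)!·∏_i π^{(ε_i)}_{r_i,s_i}(m_i) = 0`. -/
theorem stmt16 (N : ℕ) (M : Fin (N + 3) → ℕ)
    (hk : Odd (Finset.univ.filter fun i : Fin (N + 3) => Odd (M i)).card ∨
      (Finset.univ.filter fun i : Fin (N + 3) => Odd (M i)).card = 0 ∨
      (Finset.univ.filter fun i : Fin (N + 3) => Odd (M i)).card = 2) :
    ∑ t ∈ (Iset (N + 3)).filter fun t => 1 ≤ ∑ i, t.2.2 i,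
      (Nat.factorial (∑ i, t.2.1 i) : ℚ) * (∑ i, (t.1 i : ℚ) * (t.2.2 i : ℚ)) *
        (Nat.factorial ((∑ i, t.2.2 i) - 1) : ℚ) *
        ∏ i, piQ (t.2.1 i) (t.2.2 i) (t.1 i) ((M i : ℚ) / 2) = 0 := by
  set k := (Finset.univ.filter fun i : Fin (N + 3) => Odd (M i)).card with hkdef
  apply Finset.sum_eq_zero
  rintro ⟨ε, r, s⟩ ht
  simp only [Finset.mem_filter, Iset, Finset.mem_product, Fintype.mem_piFinset,
    Finset.mem_insert, Finset.mem_singleton, Finset.mem_range] at ht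
  obtain ⟨⟨⟨hε, -, -⟩, h1, h2⟩, -⟩ := ht
  by_cases hzero : ∃ i, piQ (r i) (s i) (ε i) ((M i : ℚ) / 2) = 0
  · obtain ⟨i, hi⟩ := hzero
    rw [Finset.prod_eq_zero (Finset.mem_univ i) hi, mul_zero]
  push_neg at hzero
  -- parity facts from nonvanishing
  have hpar : ∀ i, ∃ z : ℤ, (M i : ℤ) = (s i : ℤ) + 1 + ε i + 2 * z := by
    intro i
    have h := hzero i
    rw [piQ] at h
    split_ifs at h with hc
    · obtain ⟨z, hz⟩ := hc
      refine ⟨z, ?_⟩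
      have : (M i : ℚ) = (s i : ℚ) + 1 + (ε i : ℚ) + 2 * (z : ℚ) := by linarith
      exact_mod_cast this
    · exact absurd rfl h
  rcases hk with hodd | hk02
  · -- k odd : contradiction via ZMod 2
    exfalso
    have hM2 : ∀ i, (M i : ZMod 2) = (s i : ZMod 2) + 1 + ((ε i : ℤ) : ZMod 2) := by
      intro i
      obtain ⟨z, hz⟩ := hpar i
      have : ((M i : ℤ) : ZMod 2) = (((s i : ℤ) + 1 + ε i + 2 * z : ℤ) : ZMod 2) := by
        rw [hz]
      push_cast at this ⊢
      rw [this]; ring_nf; rw [show ((2 : ZMod 2)) = 0 by decide]; ring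
    have hL : (∑ i, (M i : ZMod 2)) = (k : ZMod 2) := by
      have : ∀ i : Fin (N + 3), (M i : ZMod 2) = if Odd (M i) then 1 else 0 := by
        intro i
        split_ifs with h
        · rw [Nat.odd_iff] at h; rw [← ZMod.natCast_mod, h]; rfl
        · rw [Nat.not_odd_iff] at h; rw [← ZMod.natCast_mod, h]; rfl
      rw [Finset.sum_congr rfl fun i _ => this i, hkdef, Finset.card_filter]
      push_cast
      rfl
    have hsums : (∑ i, (s i : ℤ)) + (∑ i, ε i) = (N + 1 : ℤ) := by
      have hn : (∑ _i : Fin (N + 3), (1 : ℤ)) = (N + 3 : ℤ) := by simp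
      have := h2
      rw [Finset.sum_sub_distrib, hn] at this
      linarith
    have hR : (∑ i, (M i : ZMod 2)) = 0 := by
      rw [Finset.sum_congr rfl fun i _ => hM2 i]
      have : (∑ i, ((s i : ZMod 2) + 1 + ((ε i : ℤ) : ZMod 2)))
          = (((∑ i, (s i : ℤ)) + (∑ i, ε i) + (N + 3) : ℤ) : ZMod 2) := by
        push_cast
        rw [Finset.sum_add_distrib, Finset.sum_add_distrib]
        simp
        ring
      rw [this, hsums]
      push_cast
      have h4 : ((N : ZMod 2) + 1 + ((N : ZMod 2) + 3)) = 2 * ((N : ZMod 2) + 2) := by ring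
      rw [h4, show ((2 : ZMod 2)) = 0 by decide, zero_mul]
    rw [hL] at hR
    obtain ⟨j, hj⟩ := hodd
    rw [hj] at hR
    push_cast at hR
    rw [show ((2 : ZMod 2)) = 0 by decide] at hR
    simp at hR
  · -- k = 0 or k = 2
    set B := Finset.univ.filter (fun i : Fin (N + 3) => ε i = 0) with hBdef
    -- each i in B with M i even has s i ≥ 1
    have hodds : ∀ i ∈ B.filter (fun i => ¬ Odd (M i)), 1 ≤ s i := by
      intro i hi
      simp only [hBdef, Finset.mem_filter, Finset.mem_univ, true_and] at hi
      obtain ⟨hie, him⟩ := hi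
      obtain ⟨z, hz⟩ := hpar i
      rw [hie] at hz
      rcases Nat.eq_zero_or_pos (s i) with h0 | h0
      · exfalso
        apply him
        rw [Nat.odd_iff]
        omega
      · exact h0
    have hcard1 : B.card ≤ (B.filter (fun i => ¬ Odd (M i))).card + k := by
      have hsub : B.filter (fun i => Odd (M i)) ⊆
          Finset.univ.filter (fun i : Fin (N + 3) => Odd (M i)) := by
        intro i hi
        simp only [Finset.mem_filter] at hi ⊢
        exact ⟨Finset.mem_univ i, hi.2⟩
      have := Finset.card_filter_add_card_filter_not (s := B)
        (p := fun i => Odd (M i))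
      have hle := Finset.card_le_card hsub
      omega
    have hcard2 : (B.filter (fun i => ¬ Odd (M i))).card ≤ ∑ i ∈ B, s i := by
      calc (B.filter (fun i => ¬ Odd (M i))).card
          = ∑ _i ∈ B.filter (fun i => ¬ Odd (M i)), 1 := by simp
        _ ≤ ∑ i ∈ B.filter (fun i => ¬ Odd (M i)), s i := Finset.sum_le_sum hodds
        _ ≤ ∑ i ∈ B, s i := Finset.sum_le_sum_of_subset (Finset.filter_subset _ _)
    have hBcard : (B.card : ℤ) = (∑ i, (s i : ℤ)) + 2 := by
      rw [← h2, hBdef, Finset.card_filter]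
      push_cast
      apply Finset.sum_congr rfl
      intro i _
      rcases hε i with h | h <;> simp [h]
    have hBsub : ∑ i ∈ B, s i ≤ ∑ i, s i :=
      Finset.sum_le_sum_of_subset (Finset.subset_univ B)
    have hstot : (∑ i, (s i : ℤ)) = ((∑ i, s i : ℕ) : ℤ) := by push_cast; rfl
    -- combine: ∑ s + 2 ≤ ∑_B s + k ≤ ∑ s + k
    have hkey : (∑ i, s i) + 2 ≤ (∑ i ∈ B, s i) + k := by
      have : (B.card : ℤ) = ((∑ i, s i : ℕ) : ℤ) + 2 := by rw [hBcard, hstot]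
      have hB : B.card = (∑ i, s i) + 2 := by exact_mod_cast this
      omega
    rcases hk02 with hk0 | hk2
    · exfalso; omega
    · -- k = 2 : ∑_B s = ∑ s, so s vanishes off B
      have hBeq : ∑ i ∈ B, s i = ∑ i, s i := by omega
      have hsplit := Finset.sum_filter_add_sum_filter_not Finset.univ
        (fun i : Fin (N + 3) => ε i = 0) s
      have hAzero : ∑ i ∈ Finset.univ.filter (fun i : Fin (N + 3) => ¬ ε i = 0), s i = 0 := by
        rw [hBdef] at hBeq
        omega
      have hAz : ∀ i, ε i ≠ 0 → s i = 0 := by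
        intro i hi
        have := (Finset.sum_eq_zero_iff.mp hAzero) i (by
          simp only [Finset.mem_filter, Finset.mem_univ, true_and]; exact hi)
        exact this
      have hw : (∑ i, (ε i : ℚ) * (s i : ℚ)) = 0 := by
        apply Finset.sum_eq_zero
        intro i _
        rcases hε i with h | h
        · rw [h]; push_cast; ring
        · rw [hAz i (by rw [h]; norm_num)]; push_cast; ring
      rw [hw, mul_zero, zero_mul, zero_mul]
end
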